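/- arXiv:0902.4481 — 5 statements merged into one kernel-verified Lean document; each statement's English description precedes it below -/
import Mathlib

section
/- Let L be a nonnegative random variable with an asymptotically exponential tail with decay rate μ > 0, let M ≥ 2 be an integer and λ, ν > 0. Define the random variable N̲ by P[N̲ > n] = E[(1 − e^{−L(M−1)(λ∧ν)})^n] for n ∈ ℕ. Then lim_{n→∞} (log P[N̲ > n]) / (log n) = −μ / ((M−1)(λ∧ν)). -/
open MeasureTheory Filter
open Real Set Topology

/-!
Put `c = (M - 1)(λ ∧ ν)`, `T x = P[L > x]` and `q x = 1 - e^{-xc}`. Since `q` is increasing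
with values in `[0, 1]`, splitting on the event `{L > x}` gives
`q(x)^n T(x) ≤ E[q(L)^n] ≤ T(x) + q(x)^n` for every `x ≥ 0`. Choose `x = (d / c) log n`, so
that `q(x) = 1 - n^{-d}`. For `d > 1` Bernoulli's inequality gives `q(x)^n ≥ 1/2`; for `d < 1`
we have `q(x)^n ≤ exp(-n^{1-d})`, which is eventually below `T(x) ≥ n^{-(μ+1)d/c}`. So
`E[q(L)^n]` is within a factor `2` of `T((d / c) log n) = n^{-μd/c + o(1)}`: from below when
`d > 1`, from above when `d < 1`. Letting `d → 1` gives the exponent `-μ/c`.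
-/

section IntegralBounds

variable {Ω : Type*} {mΩ : MeasurableSpace Ω} {P : Measure Ω} {L : Ω → ℝ} {g : ℝ → ℝ}

lemma integrable_comp_of_mapsTo_Icc [IsFiniteMeasure P] (hgm : Measurable g) (hL : Measurable L)
    (hLnn : ∀ ω, 0 ≤ L ω) (hg : MapsTo g (Ici 0) (Icc 0 1)) :
    Integrable (fun ω => g (L ω)) P :=
  .of_bound (hgm.comp hL).aestronglyMeasurable 1 <| .of_forall fun ω => by
    obtain ⟨h0, h1⟩ := hg (mem_Ici.2 (hLnn ω))
    rwa [Real.norm_of_nonneg h0]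

lemma mul_measureReal_lt_le_integral [IsFiniteMeasure P] (hgm : Measurable g) (hL : Measurable L)
    (hLnn : ∀ ω, 0 ≤ L ω) (hg : MapsTo g (Ici 0) (Icc 0 1)) (hg_mono : MonotoneOn g (Ici 0))
    {x : ℝ} (hx : 0 ≤ x) :
    g x * P.real {ω | x < L ω} ≤ ∫ ω, g (L ω) ∂P := by
  have hsub : {ω | x < L ω} ⊆ {ω | g x ≤ g (L ω)} := fun ω hω =>
    hg_mono (mem_Ici.2 hx) (mem_Ici.2 (hLnn ω)) (le_of_lt hω)
  calc g x * P.real {ω | x < L ω} ≤ g x * P.real {ω | g x ≤ g (L ω)} :=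
        mul_le_mul_of_nonneg_left (measureReal_mono hsub) (hg (mem_Ici.2 hx)).1
    _ ≤ ∫ ω, g (L ω) ∂P :=
        mul_meas_ge_le_integral_of_nonneg (.of_forall fun ω => (hg (mem_Ici.2 (hLnn ω))).1)
          (integrable_comp_of_mapsTo_Icc hgm hL hLnn hg) _

lemma integral_le_measureReal_lt_add [IsProbabilityMeasure P] (hgm : Measurable g)
    (hL : Measurable L) (hLnn : ∀ ω, 0 ≤ L ω) (hg : MapsTo g (Ici 0) (Icc 0 1))
    (hg_mono : MonotoneOn g (Ici 0)) {x : ℝ} (hx : 0 ≤ x) :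
    ∫ ω, g (L ω) ∂P ≤ P.real {ω | x < L ω} + g x := by
  have hs : MeasurableSet {ω | x < L ω} := measurableSet_lt measurable_const hL
  have hpt : ∀ ω, g (L ω) ≤ {ω | x < L ω}.indicator 1 ω + g x := fun ω => by
    by_cases hω : x < L ω
    · have h1 := (hg (mem_Ici.2 (hLnn ω))).2
      simp only [indicator_of_mem (show ω ∈ {ω | x < L ω} from hω), Pi.one_apply]
      linarith [(hg (mem_Ici.2 hx)).1]
    · rw [indicator_of_notMem (show ω ∉ {ω | x < L ω} from hω), zero_add]
      exact hg_mono (mem_Ici.2 (hLnn ω)) (mem_Ici.2 hx) (not_lt.1 hω)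
  calc ∫ ω, g (L ω) ∂P ≤ ∫ ω, ({ω | x < L ω}.indicator 1 ω + g x) ∂P :=
        integral_mono (integrable_comp_of_mapsTo_Icc hgm hL hLnn hg)
          ((integrable_const 1 |>.indicator hs).add (integrable_const _)) hpt
    _ = P.real {ω | x < L ω} + g x := by
        rw [integral_add ((integrable_const 1).indicator hs) (integrable_const _),
          integral_indicator_one hs, integral_const, probReal_univ, one_smul]

end IntegralBounds

section OneSubExpPow

variable {c : ℝ}

lemma one_sub_exp_neg_mul_mem_Icc {t : ℝ} (ht : 0 ≤ t) (hc : 0 ≤ c) :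
    1 - exp (-(t * c)) ∈ Icc 0 1 :=
  ⟨sub_nonneg.2 (exp_le_one_iff.2 (neg_nonpos.2 (mul_nonneg ht hc))),
    sub_le_self _ (exp_pos _).le⟩

lemma mapsTo_one_sub_exp_neg_mul_pow (hc : 0 ≤ c) (n : ℕ) :
    MapsTo (fun t => (1 - exp (-(t * c))) ^ n) (Ici 0) (Icc 0 1) := fun _ ht =>
  have h := one_sub_exp_neg_mul_mem_Icc ht hc
  ⟨pow_nonneg h.1 n, pow_le_one₀ h.1 h.2⟩

lemma monotoneOn_one_sub_exp_neg_mul_pow (hc : 0 ≤ c) (n : ℕ) :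
    MonotoneOn (fun t => (1 - exp (-(t * c))) ^ n) (Ici 0) := fun s hs t _ hst => by
  have := (one_sub_exp_neg_mul_mem_Icc hs hc).1
  dsimp only
  gcongr

end OneSubExpPow

lemma tendsto_of_eventually_bounds {α : Type*} {l : Filter α} {u : α → ℝ} {ℓ : ℝ → ℝ}
    {d₀ : ℝ} (hℓ : ContinuousAt ℓ d₀)
    (hlow : ∀ᶠ d in 𝓝[>] d₀, ∃ v : α → ℝ, Tendsto v l (𝓝 (ℓ d)) ∧ ∀ᶠ n in l, v n ≤ u n)
    (hup : ∀ᶠ d in 𝓝[<] d₀, ∃ w : α → ℝ, Tendsto w l (𝓝 (ℓ d)) ∧ ∀ᶠ n in l, u n ≤ w n) :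
    Tendsto u l (𝓝 (ℓ d₀)) := by
  refine tendsto_order.2 ⟨fun b hb => ?_, fun b hb => ?_⟩
  · obtain ⟨d, hbd, v, hv, hvu⟩ :=
      (((hℓ.tendsto.mono_left nhdsWithin_le_nhds).eventually (lt_mem_nhds hb)).and hlow).exists
    filter_upwards [hv.eventually (lt_mem_nhds hbd), hvu] with n h₁ h₂ using h₁.trans_le h₂
  · obtain ⟨d, hbd, w, hw, huw⟩ :=
      (((hℓ.tendsto.mono_left nhdsWithin_le_nhds).eventually (gt_mem_nhds hb)).and hup).exists
    filter_upwards [hw.eventually (gt_mem_nhds hbd), huw] with n h₁ h₂ using h₂.trans_lt h₁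

lemma tendsto_log_natCast_atTop : Tendsto (fun n : ℕ => log n) atTop atTop :=
  tendsto_log_atTop.comp tendsto_natCast_atTop_atTop

lemma tendsto_mul_log_natCast_atTop {k : ℝ} (hk : 0 < k) :
    Tendsto (fun n : ℕ => k * log n) atTop atTop :=
  tendsto_log_natCast_atTop.const_mul_atTop hk

lemma natCast_mul_exp_neg_mul_log {n : ℕ} (hn : 0 < n) (d : ℝ) :
    n * exp (-(d * log n)) = exp ((1 - d) * log n) := by
  rw [sub_mul, one_mul, sub_eq_add_neg, exp_add, exp_log (by positivity)]

lemma eventually_half_le_one_sub_exp_pow {d : ℝ} (hd : 1 < d) :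
    ∀ᶠ n : ℕ in atTop, 2⁻¹ ≤ (1 - exp (-(d * log n))) ^ n := by
  have h : Tendsto (fun n : ℕ => exp ((1 - d) * log n)) atTop (𝓝 0) :=
    tendsto_exp_atBot.comp (tendsto_log_natCast_atTop.const_mul_atTop_of_neg (by linarith))
  filter_upwards [h.eventually (ge_mem_nhds (show (0 : ℝ) < 2⁻¹ by norm_num)),
    eventually_gt_atTop 0] with n hn hn₀
  have he : exp (-(d * log n)) ≤ 1 :=
    exp_le_one_iff.2 (neg_nonpos.2 (mul_nonneg (by linarith) (log_natCast_nonneg n)))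
  have hB := one_add_mul_le_pow (show -2 ≤ -exp (-(d * log n)) by linarith) n
  rw [mul_neg, ← sub_eq_add_neg, ← sub_eq_add_neg, natCast_mul_exp_neg_mul_log hn₀] at hB
  linarith

lemma eventually_one_sub_exp_pow_le {d : ℝ} (hd₀ : 0 ≤ d) (hd₁ : d < 1) (K : ℝ) :
    ∀ᶠ n : ℕ in atTop, (1 - exp (-(d * log n))) ^ n ≤ exp (-(K * log n)) := by
  have hlin : ∀ᶠ y in atTop, K * y ≤ exp ((1 - d) * y) := by
    filter_upwards [(tendsto_exp_mul_div_rpow_atTop 1 (1 - d) (by linarith)).eventually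
      (eventually_ge_atTop K), eventually_gt_atTop 0] with y hy hy₀
    rwa [rpow_one, le_div_iff₀ hy₀] at hy
  filter_upwards [tendsto_log_natCast_atTop.eventually hlin, eventually_gt_atTop 0]
    with n hn hn₀
  have h₀ : 0 ≤ 1 - exp (-(d * log n)) := by
    rw [mul_comm]; exact (one_sub_exp_neg_mul_mem_Icc (log_natCast_nonneg n) hd₀).1
  calc (1 - exp (-(d * log n))) ^ n ≤ exp (-exp (-(d * log n))) ^ n :=
        pow_le_pow_left₀ h₀ (one_sub_le_exp_neg _) n
    _ = exp (-exp ((1 - d) * log n)) := by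
        rw [← exp_nat_mul, mul_neg, natCast_mul_exp_neg_mul_log hn₀]
    _ ≤ exp (-(K * log n)) := exp_le_exp.2 (neg_le_neg hn)

section Tail

variable {T : ℝ → ℝ} {μ : ℝ}

lemma eventually_ne_zero_of_tendsto_log_div (hμ : 0 < μ)
    (htail : Tendsto (fun x => log (T x) / x) atTop (𝓝 (-μ))) :
    ∀ᶠ x in atTop, T x ≠ 0 := by
  filter_upwards [htail.eventually (gt_mem_nhds (neg_neg_of_pos hμ))] with x hx hT
  simp [hT] at hx

lemma eventually_exp_le_of_tendsto_log_div (hT : ∀ x, 0 ≤ T x) (hμ : 0 < μ)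
    (htail : Tendsto (fun x => log (T x) / x) atTop (𝓝 (-μ))) :
    ∀ᶠ x in atTop, exp (-(μ + 1) * x) ≤ T x := by
  filter_upwards [htail.eventually (lt_mem_nhds (show -(μ + 1) < -μ by linarith)),
    eventually_ne_zero_of_tendsto_log_div hμ htail, eventually_gt_atTop 0] with x hx hT₀ hx₀
  rw [lt_div_iff₀ hx₀] at hx
  calc exp (-(μ + 1) * x) ≤ exp (log (T x)) := exp_le_exp.2 hx.le
    _ = T x := exp_log ((hT x).lt_of_ne' hT₀)

lemma tendsto_log_const_mul_comp_mul_log_div_log (hμ : 0 < μ)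
    (htail : Tendsto (fun x => log (T x) / x) atTop (𝓝 (-μ))) {C k : ℝ} (hC : 0 < C)
    (hk : 0 < k) :
    Tendsto (fun n : ℕ => log (C * T (k * log n)) / log n) atTop (𝓝 (-μ * k)) := by
  have h := (tendsto_const_nhds (x := log C)).div_atTop tendsto_log_natCast_atTop |>.add
    ((htail.comp (tendsto_mul_log_natCast_atTop hk)).mul_const k)
  rw [zero_add] at h
  refine h.congr' ?_
  filter_upwards [(tendsto_mul_log_natCast_atTop hk).eventually
    (eventually_ne_zero_of_tendsto_log_div hμ htail),
    tendsto_log_natCast_atTop.eventually (eventually_gt_atTop 0)] with n hT hn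
  simp only [Function.comp_apply] at hn ⊢
  rw [log_mul hC.ne' hT]
  field_simp

end Tail

section PowerLaw

variable {a : ℕ → ℝ} {T : ℝ → ℝ} {μ c : ℝ}

lemma eventually_half_mul_le (hc : 0 < c) (hT : ∀ x, 0 ≤ T x)
    (hlb : ∀ x, 0 ≤ x → ∀ n : ℕ, (1 - exp (-(x * c))) ^ n * T x ≤ a n) {d : ℝ}
    (hd : 1 < d) :
    ∀ᶠ n : ℕ in atTop, 2⁻¹ * T (d / c * log n) ≤ a n := by
  filter_upwards [eventually_half_le_one_sub_exp_pow hd] with n hn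
  have hx : d / c * log n * c = d * log n := by field_simp
  calc 2⁻¹ * T (d / c * log n) ≤ (1 - exp (-(d / c * log n * c))) ^ n * T (d / c * log n) := by
        rw [hx]; exact mul_le_mul_of_nonneg_right hn (hT _)
    _ ≤ a n := hlb _ (mul_nonneg (div_nonneg (by linarith) hc.le) (log_natCast_nonneg n)) n

lemma eventually_le_two_mul (hμ : 0 < μ) (hc : 0 < c) (hT : ∀ x, 0 ≤ T x)
    (htail : Tendsto (fun x => log (T x) / x) atTop (𝓝 (-μ)))
    (hub : ∀ x, 0 ≤ x → ∀ n : ℕ, a n ≤ T x + (1 - exp (-(x * c))) ^ n) {d : ℝ}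
    (hd₀ : 0 < d) (hd₁ : d < 1) :
    ∀ᶠ n : ℕ in atTop, a n ≤ 2 * T (d / c * log n) := by
  filter_upwards [(tendsto_mul_log_natCast_atTop (div_pos hd₀ hc)).eventually
      (eventually_exp_le_of_tendsto_log_div hT hμ htail),
    eventually_one_sub_exp_pow_le hd₀.le hd₁ ((μ + 1) * (d / c))] with n hTn hqn
  have hx : d / c * log n * c = d * log n := by field_simp
  have hq : (1 - exp (-(d / c * log n * c))) ^ n ≤ T (d / c * log n) := by
    rw [hx]
    refine hqn.trans (le_of_eq_of_le ?_ hTn)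
    ring_nf
  linarith [hub _ (mul_nonneg (div_nonneg hd₀.le hc.le) (log_natCast_nonneg n)) n]

theorem tendsto_log_div_log_of_sandwich (hμ : 0 < μ) (hc : 0 < c) (hT : ∀ x, 0 ≤ T x)
    (htail : Tendsto (fun x => log (T x) / x) atTop (𝓝 (-μ)))
    (hlb : ∀ x, 0 ≤ x → ∀ n : ℕ, (1 - exp (-(x * c))) ^ n * T x ≤ a n)
    (hub : ∀ x, 0 ≤ x → ∀ n : ℕ, a n ≤ T x + (1 - exp (-(x * c))) ^ n) :
    Tendsto (fun n : ℕ => log (a n) / log n) atTop (𝓝 (-(μ / c))) := by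
  have hTpos {k : ℝ} (hk : 0 < k) : ∀ᶠ n : ℕ in atTop, 0 < T (k * log n) :=
    (tendsto_mul_log_natCast_atTop hk).eventually <|
      (eventually_ne_zero_of_tendsto_log_div hμ htail).mono fun x hx => (hT x).lt_of_ne' hx
  have hapos : ∀ᶠ n : ℕ in atTop, 0 < a n := by
    filter_upwards [hTpos (div_pos two_pos hc), eventually_half_mul_le hc hT hlb one_lt_two]
      with n hTn han
    exact lt_of_lt_of_le (by positivity) han
  rw [show -(μ / c) = -μ * (1 / c) by ring]
  refine tendsto_of_eventually_bounds (ℓ := fun d => -μ * (d / c)) (by fun_prop) ?_ ?_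
  · filter_upwards [self_mem_nhdsWithin] with d (hd : 1 < d)
    refine ⟨_, tendsto_log_const_mul_comp_mul_log_div_log hμ htail (C := 2⁻¹) (by norm_num)
      (div_pos (by linarith) hc), ?_⟩
    filter_upwards [hTpos (div_pos (by linarith) hc), eventually_half_mul_le hc hT hlb hd]
      with n hTn han
    gcongr
  · filter_upwards [Ioo_mem_nhdsLT one_pos] with d ⟨hd₀, hd₁⟩
    refine ⟨_, tendsto_log_const_mul_comp_mul_log_div_log hμ htail two_pos
      (div_pos hd₀ hc), ?_⟩
    filter_upwards [hapos, eventually_le_two_mul hμ hc hT htail hub hd₀ hd₁] with n han hle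
    gcongr

end PowerLaw

/-- Proposition 1, eq. (5): power law for the lower-bounding number of retransmissions
`P[N̲ > n] = E[(1 - e^{-L(M-1)(λ∧ν)})^n]` in finite population ALOHA. -/
theorem stmt0 {Ω : Type*} {mΩ : MeasurableSpace Ω} (P : Measure Ω) [IsProbabilityMeasure P]
    (L : Ω → ℝ) (hLm : Measurable L) (hLnn : ∀ ω, 0 ≤ L ω)
    (μ lam ν : ℝ) (hμ : 0 < μ) (hlam : 0 < lam) (hν : 0 < ν)
    (M : ℕ) (hM : 2 ≤ M)
    (htail : Tendsto (fun x : ℝ => Real.log (P {ω | L ω > x}).toReal / x) atTop (nhds (-μ))) :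
    Tendsto (fun n : ℕ =>
        Real.log (∫ ω, (1 - Real.exp (-(L ω * ((M : ℝ) - 1) * min lam ν))) ^ n ∂P)
          / Real.log n) atTop
      (nhds (-(μ / (((M : ℝ) - 1) * min lam ν)))) := by
  have hc : 0 < ((M : ℝ) - 1) * min lam ν :=
    mul_pos (by linarith [show (2 : ℝ) ≤ M by exact_mod_cast hM]) (lt_min hlam hν)
  simp only [mul_assoc]
  exact tendsto_log_div_log_of_sandwich hμ hc (fun _ => ENNReal.toReal_nonneg) htail
    (fun x hx n => mul_measureReal_lt_le_integral (by fun_prop) hLm hLnn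
      (mapsTo_one_sub_exp_neg_mul_pow hc.le n) (monotoneOn_one_sub_exp_neg_mul_pow hc.le n) hx)
    (fun x hx n => integral_le_measureReal_lt_add (by fun_prop) hLm hLnn
      (mapsTo_one_sub_exp_neg_mul_pow hc.le n) (monotoneOn_one_sub_exp_neg_mul_pow hc.le n) hx)
end

section
/- Let M ≥ 2 be an integer, ν > 0, and let L_1, …, L_M be i.i.d. nonnegative random variables, each with an asymptotically exponential tail with decay rate μ > 0. Then lim_{n→∞} (log E[(1 − (1/M) Σ_{i=1}^{M} e^{−L_i (M−1)ν})^n]) / (log n) = −Mμ / ((M−1)ν). -/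
/-!
Write `Z = (1/M) ∑ᵢ Yᵢ` with `Yᵢ = exp (-(M - 1) ν Lᵢ)`. The exponential tail of `Lᵢ` says that
`P (Yᵢ ≤ t) = t ^ (μ / ((M - 1) ν) + o(1))` as `t → 0⁺`. Since `{∀ i, Yᵢ ≤ t} ⊆ {Z ≤ t} ⊆
{∀ i, Yᵢ ≤ M t}`, independence gives `P (Z ≤ t) = t ^ (α + o(1))` with `α = M μ / ((M - 1) ν)`.
Finally `E[(1 - Z) ^ n]` is squeezed between `P (Z ≤ t) / 2` at `t = 1 / (2n)` (Bernoulli) and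
`P (Z ≤ t) + exp (-n t)` at `t = (α + 1) log n / n`, and both are `n ^ (-α + o(1))`.
-/

open MeasureTheory Filter ProbabilityTheory Topology Real

/-- `f t = t ^ (β + o(1))` as `t → 0⁺`. -/
def HasPowerLawAtZero (f : ℝ → ℝ) (β : ℝ) : Prop :=
  Tendsto (fun t => log (f t) / log t) (𝓝[>] 0) (𝓝 β)

namespace HasPowerLawAtZero

variable {f g h : ℝ → ℝ} {β : ℝ}

theorem eventually_pos (hf : HasPowerLawAtZero f β) (hf0 : ∀ t, 0 ≤ f t) (hβ : 0 < β) :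
    ∀ᶠ t in 𝓝[>] 0, 0 < f t := by
  filter_upwards [Tendsto.eventually_ne hf hβ.ne'] with t ht
  refine (hf0 t).lt_of_ne' fun h0 => ?_
  simp [h0] at ht

theorem tendsto_log_comp_div {α : Type*} {l : Filter α} {s r : α → ℝ} {γ : ℝ}
    (hf : HasPowerLawAtZero f β) (hs : Tendsto s l (𝓝[>] 0))
    (hsr : Tendsto (fun x => log (s x) / r x) l (𝓝 γ)) :
    Tendsto (fun x => log (f (s x)) / r x) l (𝓝 (β * γ)) := by
  refine ((Tendsto.comp hf hs).mul hsr).congr' ?_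
  filter_upwards [hs (Ioo_mem_nhdsGT one_pos)] with x hx
  exact div_mul_div_cancel₀ (log_neg hx.1 hx.2).ne

theorem comp_const_mul (hf : HasPowerLawAtZero f β) {K : ℝ} (hK : 0 < K) :
    HasPowerLawAtZero (fun t => f (K * t)) β := by
  have hlog : Tendsto (fun t => log (K * t) / log t) (𝓝[>] 0) (𝓝 1) := by
    have h := (tendsto_const_nhds (x := log K)).div_atBot tendsto_log_nhdsGT_zero |>.add_const 1
    rw [zero_add] at h
    refine h.congr' ?_
    filter_upwards [Ioo_mem_nhdsGT one_pos] with t ht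
    rw [log_mul hK.ne' ht.1.ne', add_div, div_self (log_neg ht.1 ht.2).ne]
  have h := hf.tendsto_log_comp_div (tendsto_iff_comap.2 (comap_mulLeft_nhdsGT_zero hK).ge) hlog
  rwa [mul_one] at h

theorem prod {ι : Type*} (s : Finset ι) {f : ι → ℝ → ℝ} {β : ι → ℝ}
    (hf : ∀ i ∈ s, HasPowerLawAtZero (f i) (β i)) (hpos : ∀ i ∈ s, ∀ᶠ t in 𝓝[>] 0, 0 < f i t) :
    HasPowerLawAtZero (fun t => ∏ i ∈ s, f i t) (∑ i ∈ s, β i) := by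
  refine (tendsto_finsetSum s hf).congr' ?_
  filter_upwards [(eventually_all_finset s).2 hpos] with t ht
  rw [log_prod fun i hi => (ht i hi).ne', Finset.sum_div]

theorem of_le_of_le (hg : HasPowerLawAtZero g β) (hh : HasPowerLawAtZero h β)
    (hg0 : ∀ᶠ t in 𝓝[>] 0, 0 < g t) (hgf : ∀ᶠ t in 𝓝[>] 0, g t ≤ f t)
    (hfh : ∀ᶠ t in 𝓝[>] 0, f t ≤ h t) : HasPowerLawAtZero f β := by
  refine tendsto_of_tendsto_of_tendsto_of_le_of_le' hh hg ?_ ?_ <;>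
    filter_upwards [hg0, hgf, hfh, Ioo_mem_nhdsGT one_pos] with t h0 h1 h2 ht
  · exact div_le_div_of_nonpos_of_le (log_neg ht.1 ht.2).le (log_le_log (h0.trans_le h1) h2)
  · exact div_le_div_of_nonpos_of_le (log_neg ht.1 ht.2).le (log_le_log h0 h1)

end HasPowerLawAtZero

theorem hasPowerLawAtZero_comp_neg_log_div {q : ℝ → ℝ} {μ c : ℝ}
    (hq : Tendsto (fun x => log (q x) / x) atTop (𝓝 (-μ))) (hc : 0 < c) (a : ℝ) :
    HasPowerLawAtZero (fun t => q (-log t / c + a)) (μ / c) := by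
  have hx : Tendsto (fun t => -log t / c + a) (𝓝[>] 0) atTop :=
    tendsto_atTop_add_const_right _ a
      ((tendsto_neg_atBot_atTop.comp tendsto_log_nhdsGT_zero).atTop_div_const hc)
  have hxlog : Tendsto (fun t => (-log t / c + a) / log t) (𝓝[>] 0) (𝓝 (-c⁻¹)) := by
    have h := (tendsto_const_nhds (x := a)).div_atBot tendsto_log_nhdsGT_zero |>.const_add (-c⁻¹)
    rw [add_zero] at h
    refine h.congr' ?_
    filter_upwards [Ioo_mem_nhdsGT one_pos] with t ht
    field_simp [(log_neg ht.1 ht.2).ne]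
  have h := (hq.comp hx).mul hxlog
  rw [neg_mul_neg, ← div_eq_mul_inv] at h
  refine h.congr' ?_
  filter_upwards [hx.eventually_ne_atTop 0] with t ht
  exact div_mul_div_cancel₀ ht

theorem hasPowerLawAtZero_measure_exp_neg_mul_le {Ω : Type*} {mΩ : MeasurableSpace Ω}
    {P : Measure Ω} [IsFiniteMeasure P] {X : Ω → ℝ} {μ c : ℝ} (hμ : 0 < μ) (hc : 0 < c)
    (hX : Tendsto (fun x => log (P {ω | X ω > x}).toReal / x) atTop (𝓝 (-μ))) :
    HasPowerLawAtZero (fun t => (P {ω | exp (-(X ω * c)) ≤ t}).toReal) (μ / c) := by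
  have hlow := hasPowerLawAtZero_comp_neg_log_div hX hc 0
  have hup := hasPowerLawAtZero_comp_neg_log_div hX hc (-1)
  have hset : ∀ t > 0, {ω | exp (-(X ω * c)) ≤ t} = {ω | -log t / c ≤ X ω} := by
    intro t ht
    ext ω
    rw [Set.mem_ofPred_eq, Set.mem_ofPred_eq, ← le_log_iff_exp_le ht, div_le_iff₀ hc]
    constructor <;> intro h <;> linarith
  refine hlow.of_le_of_le hup
    (hlow.eventually_pos (fun _ => ENNReal.toReal_nonneg) (div_pos hμ hc)) ?_ ?_ <;>
    filter_upwards [self_mem_nhdsWithin] with t (ht : 0 < t) <;>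
    rw [hset t ht] <;>
    refine ENNReal.toReal_mono (measure_ne_top _ _) (measure_mono fun ω hω => ?_) <;>
    simp only [Set.mem_ofPred_eq] at hω ⊢ <;> linarith

namespace ProbabilityTheory

variable {Ω ι : Type*} {mΩ : MeasurableSpace Ω} {P : Measure Ω} [Fintype ι] {Y : ι → Ω → ℝ}

theorem iIndepFun.prod_measure_le_le_measure_sum_le (hY : iIndepFun Y P) (t : ℝ) :
    ∏ i, P {ω | Y i ω ≤ t} ≤ P {ω | ∑ i, Y i ω ≤ Fintype.card ι * t} := by
  have h := hY.measure_inter_preimage_eq_mul Finset.univ (sets := fun _ => Set.Iic t)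
    fun _ _ => measurableSet_Iic
  simp only [Finset.mem_univ, Set.iInter_true] at h
  refine h.symm.trans_le (measure_mono fun ω hω => ?_)
  simp only [Set.mem_iInter, Set.mem_preimage, Set.mem_Iic] at hω
  simpa using Finset.sum_le_sum fun i (_ : i ∈ Finset.univ) => hω i

theorem iIndepFun.measure_sum_le_le_prod_measure (hY : iIndepFun Y P)
    (hY0 : ∀ i ω, 0 ≤ Y i ω) (t : ℝ) : P {ω | ∑ i, Y i ω ≤ t} ≤ ∏ i, P {ω | Y i ω ≤ t} := by
  have h := hY.measure_inter_preimage_eq_mul Finset.univ (sets := fun _ => Set.Iic t)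
    fun _ _ => measurableSet_Iic
  simp only [Finset.mem_univ, Set.iInter_true] at h
  refine (measure_mono fun ω (hω : _ ≤ t) => ?_).trans_eq h
  simp only [Set.mem_iInter, Set.mem_preimage, Set.mem_Iic]
  exact fun i => (Finset.single_le_sum (fun j _ => hY0 j ω) (Finset.mem_univ i)).trans hω

theorem iIndepFun.hasPowerLawAtZero_measure_mean_le [IsFiniteMeasure P] [Nonempty ι]
    (hY : iIndepFun Y P) (hY0 : ∀ i ω, 0 ≤ Y i ω) {β : ι → ℝ} (hβ : ∀ i, 0 < β i)
    (h : ∀ i, HasPowerLawAtZero (fun t => (P {ω | Y i ω ≤ t}).toReal) (β i)) :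
    HasPowerLawAtZero (fun t => (P {ω | 1 / (Fintype.card ι : ℝ) * ∑ i, Y i ω ≤ t}).toReal)
      (∑ i, β i) := by
  set n : ℝ := (Fintype.card ι : ℝ)
  have hn : 0 < n := Nat.cast_pos.2 Fintype.card_pos
  have hprod : HasPowerLawAtZero (fun t => ∏ i, (P {ω | Y i ω ≤ t}).toReal) (∑ i, β i) :=
    .prod _ (fun i _ => h i)
      fun i _ => (h i).eventually_pos (fun _ => ENNReal.toReal_nonneg) (hβ i)
  have hmean : ∀ t, {ω | 1 / n * ∑ i, Y i ω ≤ t} = {ω | ∑ i, Y i ω ≤ n * t} := fun t => by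
    ext ω
    simp only [Set.mem_ofPred_eq, one_div, inv_mul_le_iff₀ hn]
  refine hprod.of_le_of_le (hprod.comp_const_mul hn)
    (hprod.eventually_pos (fun _ => Finset.prod_nonneg fun _ _ => ENNReal.toReal_nonneg)
      (Finset.sum_pos (fun i _ => hβ i) Finset.univ_nonempty))
    (.of_forall fun t => ?_) (.of_forall fun t => ?_) <;>
    simp only [hmean, ← ENNReal.toReal_prod]
  · exact ENNReal.toReal_mono (measure_ne_top _ _) (hY.prod_measure_le_le_measure_sum_le t)
  · exact ENNReal.toReal_mono (ENNReal.prod_ne_top fun _ _ => measure_ne_top _ _)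
      (hY.measure_sum_le_le_prod_measure hY0 (n * t))

end ProbabilityTheory

theorem tendsto_log_inv_two_mul_div_log :
    Tendsto (fun x : ℝ => log (2 * x)⁻¹ / log x) atTop (𝓝 (-1)) := by
  have h := (tendsto_const_nhds (x := -log 2)).div_atTop tendsto_log_atTop |>.sub_const 1
  rw [zero_sub] at h
  refine h.congr' ?_
  filter_upwards [eventually_gt_atTop 1] with x hx
  rw [log_inv, log_mul two_ne_zero (by positivity)]
  field_simp [(log_pos hx).ne']
  ring

theorem tendsto_log_const_mul_log_div_self_div_log {K : ℝ} (hK : 0 < K) :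
    Tendsto (fun x : ℝ => log (K * log x / x) / log x) atTop (𝓝 (-1)) := by
  have hloglog : Tendsto (fun x => log (log x) / log x) atTop (𝓝 0) := by
    simpa [Function.comp_def] using
      (tendsto_pow_log_div_mul_add_atTop 1 0 1 one_ne_zero).comp tendsto_log_atTop
  have h := ((tendsto_const_nhds (x := log K)).div_atTop tendsto_log_atTop).add hloglog
    |>.sub_const 1
  rw [zero_add, zero_sub] at h
  refine h.congr' ?_
  filter_upwards [eventually_gt_atTop 1] with x hx
  have hlog := log_pos hx
  rw [log_div (by positivity) (by positivity), log_mul hK.ne' hlog.ne']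
  field_simp

theorem tendsto_log_const_mul_div {α : Type*} {l : Filter α} {a r : α → ℝ} {L K : ℝ}
    (hK : 0 < K) (hr : Tendsto r l atTop) (ha : ∀ᶠ x in l, 0 < a x)
    (h : Tendsto (fun x => log (a x) / r x) l (𝓝 L)) :
    Tendsto (fun x => log (K * a x) / r x) l (𝓝 L) := by
  have h' := ((tendsto_const_nhds (x := log K)).div_atTop hr).add h
  rw [zero_add] at h'
  refine h'.congr' ?_
  filter_upwards [ha] with x hx
  rw [log_mul hK.ne' hx.ne', add_div]

section OneSubPow

variable {Ω : Type*} {mΩ : MeasurableSpace Ω} {P : Measure Ω} {Z : Ω → ℝ}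

theorem integrable_one_sub_pow [IsFiniteMeasure P] (hZ : Measurable Z) (hZ0 : ∀ ω, 0 ≤ Z ω)
    (hZ1 : ∀ ω, Z ω ≤ 1) (n : ℕ) : Integrable (fun ω => (1 - Z ω) ^ n) P := by
  refine .of_bound (by fun_prop) 1 (.of_forall fun ω => ?_)
  rw [norm_pow, Real.norm_of_nonneg (sub_nonneg.2 (hZ1 ω))]
  exact pow_le_one₀ (sub_nonneg.2 (hZ1 ω)) (by linarith [hZ0 ω])

theorem pow_mul_measure_le_le_integral_one_sub_pow [IsFiniteMeasure P] (hZ : Measurable Z)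
    (hZ0 : ∀ ω, 0 ≤ Z ω) (hZ1 : ∀ ω, Z ω ≤ 1) (n : ℕ) {t : ℝ} (ht : t ≤ 1) :
    (1 - t) ^ n * (P {ω | Z ω ≤ t}).toReal ≤ ∫ ω, (1 - Z ω) ^ n ∂P := by
  have hmeas : MeasurableSet {ω | Z ω ≤ t} := hZ measurableSet_Iic
  have h := integral_mono ((integrable_const (μ := P) ((1 - t) ^ n)).indicator hmeas)
    (integrable_one_sub_pow hZ hZ0 hZ1 n) fun ω => by
      by_cases hω : ω ∈ {ω | Z ω ≤ t}
      · rw [Set.indicator_of_mem hω]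
        exact pow_le_pow_left₀ (sub_nonneg.2 ht) (sub_le_sub_left hω 1) n
      · rw [Set.indicator_of_notMem hω]
        exact pow_nonneg (sub_nonneg.2 (hZ1 ω)) n
  rwa [integral_indicator_const _ hmeas, smul_eq_mul, mul_comm] at h

theorem integral_one_sub_pow_le_measure_le_add_exp [IsProbabilityMeasure P] (hZ : Measurable Z)
    (hZ0 : ∀ ω, 0 ≤ Z ω) (hZ1 : ∀ ω, Z ω ≤ 1) (n : ℕ) (t : ℝ) :
    ∫ ω, (1 - Z ω) ^ n ∂P ≤ (P {ω | Z ω ≤ t}).toReal + exp (-(n * t)) := by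
  have hmeas : MeasurableSet {ω | Z ω ≤ t} := hZ measurableSet_Iic
  have hind := (integrable_const (1 : ℝ)).indicator (μ := P) hmeas
  have h := integral_mono (integrable_one_sub_pow hZ hZ0 hZ1 n)
    (hind.add (integrable_const (exp (-(n * t))))) fun ω => by
      have h0 : 0 ≤ 1 - Z ω := sub_nonneg.2 (hZ1 ω)
      by_cases hω : ω ∈ {ω | Z ω ≤ t}
      · rw [Pi.add_apply, Set.indicator_of_mem hω]
        linarith [pow_le_one₀ (n := n) h0 (by linarith [hZ0 ω] : 1 - Z ω ≤ 1), exp_pos (-(n * t))]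
      · rw [Pi.add_apply, Set.indicator_of_notMem hω, zero_add]
        calc (1 - Z ω) ^ n ≤ exp (-Z ω) ^ n := pow_le_pow_left₀ h0 (one_sub_le_exp_neg _) n
          _ = exp (-(n * Z ω)) := by rw [← exp_nat_mul, mul_neg]
          _ ≤ exp (-(n * t)) := by gcongr; exact (not_le.1 hω).le
  rwa [integral_add' hind (integrable_const _), integral_indicator_const _ hmeas,
    integral_const, probReal_univ, smul_eq_mul, mul_one, one_smul] at h

theorem tendsto_log_integral_one_sub_pow_div_log [IsProbabilityMeasure P] (hZ : Measurable Z)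
    (hZ0 : ∀ ω, 0 ≤ Z ω) (hZ1 : ∀ ω, Z ω ≤ 1) {α : ℝ} (hα : 0 < α)
    (hF : HasPowerLawAtZero (fun t => (P {ω | Z ω ≤ t}).toReal) α) :
    Tendsto (fun n : ℕ => log (∫ ω, (1 - Z ω) ^ n ∂P) / log n) atTop (𝓝 (-α)) := by
  set F := fun t => (P {ω | Z ω ≤ t}).toReal
  set I := fun n : ℕ => ∫ ω, (1 - Z ω) ^ n ∂P
  set s : ℕ → ℝ := fun n => (2 * n)⁻¹
  set r : ℕ → ℝ := fun n => (α + 1) * log n / n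
  have hn : Tendsto (fun n : ℕ => (n : ℝ)) atTop atTop := tendsto_natCast_atTop_atTop
  have hlogn : ∀ᶠ n : ℕ in atTop, 0 < log n :=
    hn.eventually (eventually_gt_atTop 1) |>.mono fun _ => log_pos
  have hs : Tendsto s atTop (𝓝[>] 0) :=
    tendsto_inv_atTop_nhdsGT_zero.comp (hn.const_mul_atTop two_pos)
  have hr : Tendsto r atTop (𝓝[>] 0) := by
    refine tendsto_nhdsWithin_iff.2 ⟨?_, ?_⟩
    · simpa [r, mul_div_assoc, Function.comp_def] using
        ((tendsto_pow_log_div_mul_add_atTop 1 0 1 one_ne_zero).const_mul (α + 1)).comp hn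
    · filter_upwards [hlogn, eventually_gt_atTop 0] with n h hn0
      exact div_pos (mul_pos (by linarith) h) (Nat.cast_pos.2 hn0)
  have hFs : Tendsto (fun n => log (F (s n)) / log n) atTop (𝓝 (-α)) := by
    simpa using hF.tendsto_log_comp_div hs (tendsto_log_inv_two_mul_div_log.comp hn)
  have hFr : Tendsto (fun n => log (F (r n)) / log n) atTop (𝓝 (-α)) := by
    simpa using hF.tendsto_log_comp_div hr
      ((tendsto_log_const_mul_log_div_self_div_log (by linarith : 0 < α + 1)).comp hn)
  have hF0 := hF.eventually_pos (fun _ => ENNReal.toReal_nonneg) hα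
  have hlow : ∀ᶠ n : ℕ in atTop, 2⁻¹ * F (s n) ≤ I n := by
    filter_upwards [eventually_gt_atTop 0] with n hn0
    have hsn : n * s n = 2⁻¹ := by simp only [s]; field_simp
    have hs1 : s n ≤ 1 :=
      inv_le_one_of_one_le₀ (by have : (1 : ℝ) ≤ n := Nat.one_le_cast.2 hn0; linarith)
    have hbern : 2⁻¹ ≤ (1 - s n) ^ n := by
      have h := one_add_mul_le_pow (a := -s n) (by linarith) n
      rw [mul_neg, hsn, ← sub_eq_add_neg, ← sub_eq_add_neg] at h
      linarith
    calc 2⁻¹ * F (s n) ≤ (1 - s n) ^ n * F (s n) := by gcongr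
      _ ≤ I n := pow_mul_measure_le_le_integral_one_sub_pow hZ hZ0 hZ1 n hs1
  -- `exp (-(n * r n)) = n ^ (-(α + 1))` is eventually dominated by `F (r n) = n ^ (-α + o(1))`.
  have hup : ∀ᶠ n : ℕ in atTop, I n ≤ 2 * F (r n) := by
    filter_upwards [hFr.eventually (lt_mem_nhds (by linarith : -(α + 1) < -α)), hr.eventually hF0,
      hlogn, eventually_gt_atTop 0] with n h1 h0 hlog hn0
    have hnr : n * r n = (α + 1) * log n := by simp only [r]; field_simp
    have hexp : exp (-(n * r n)) ≤ F (r n) := by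
      rw [← exp_log h0, exp_le_exp, hnr]
      rw [lt_div_iff₀ hlog] at h1
      linarith
    linarith [integral_one_sub_pow_le_measure_le_add_exp hZ hZ0 hZ1 (P := P) n (r n)]
  refine tendsto_of_tendsto_of_tendsto_of_le_of_le'
    (tendsto_log_const_mul_div (a := fun n => F (s n)) (inv_pos.2 two_pos)
      (tendsto_log_atTop.comp hn) (hs.eventually hF0) hFs)
    (tendsto_log_const_mul_div (a := fun n => F (r n)) two_pos
      (tendsto_log_atTop.comp hn) (hr.eventually hF0) hFr) ?_ ?_
  · filter_upwards [hlow, hs.eventually hF0, hlogn] with n h h0 hlog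
    exact div_le_div_of_nonneg_right (log_le_log (by positivity) h) hlog.le
  · filter_upwards [hlow, hup, hs.eventually hF0, hlogn] with n h1 h2 h0 hlog
    have hI : 0 < I n := (by positivity : (0 : ℝ) < 2⁻¹ * F (s n)).trans_le h1
    exact div_le_div_of_nonneg_right (log_le_log hI h2) hlog.le

end OneSubPow

theorem stmt4_general {Ω : Type*} {mΩ : MeasurableSpace Ω} (P : Measure Ω) [IsProbabilityMeasure P]
    (M : ℕ) (hM : 2 ≤ M) (μ ν : ℝ) (hμ : 0 < μ) (hν : 0 < ν)
    (L : Fin M → Ω → ℝ) (hLm : ∀ i, Measurable (L i)) (hLnn : ∀ i ω, 0 ≤ L i ω)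
    (hindep : iIndepFun L P)
    (htail : ∀ i, Tendsto (fun x : ℝ => Real.log (P {ω | L i ω > x}).toReal / x) atTop
      (nhds (-μ))) :
    Tendsto (fun n : ℕ =>
        Real.log (∫ ω,
            (1 - (1 / (M : ℝ)) * ∑ i, Real.exp (-(L i ω * ((M : ℝ) - 1) * ν))) ^ n ∂P)
          / Real.log n) atTop
      (nhds (-((M : ℝ) * μ / (((M : ℝ) - 1) * ν)))) := by
  have hc : 0 < ((M : ℝ) - 1) * ν :=
    mul_pos (by linarith [(Nat.ofNat_le_cast.2 hM : (2 : ℝ) ≤ M)]) hν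
  have : Nonempty (Fin M) := ⟨⟨0, by omega⟩⟩
  set Y : Fin M → Ω → ℝ := fun i ω => exp (-(L i ω * ((M : ℝ) - 1) * ν))
  have hY : iIndepFun Y P :=
    hindep.comp (fun _ x => exp (-(x * ((M : ℝ) - 1) * ν))) fun _ => by fun_prop
  have hYlaw : ∀ i, HasPowerLawAtZero (fun t => (P {ω | Y i ω ≤ t}).toReal)
      (μ / (((M : ℝ) - 1) * ν)) := fun i => by
    simpa only [Y, mul_assoc] using hasPowerLawAtZero_measure_exp_neg_mul_le hμ hc (htail i)
  have hmean := hY.hasPowerLawAtZero_measure_mean_le (fun _ _ => (exp_pos _).le)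
    (fun _ => div_pos hμ hc) hYlaw
  simp only [Finset.sum_const, Finset.card_univ, Fintype.card_fin, nsmul_eq_mul,
    ← mul_div_assoc] at hmean
  have hZ1 : ∀ ω, 1 / (M : ℝ) * ∑ i, Y i ω ≤ 1 := fun ω => by
    have hY1 : ∀ i, Y i ω ≤ 1 := fun i =>
      exp_le_one_iff.2 (neg_nonpos.2 (mul_assoc (L i ω) _ ν ▸ mul_nonneg (hLnn i ω) hc.le))
    calc 1 / (M : ℝ) * ∑ i, Y i ω ≤ 1 / M * M := by
          gcongr
          simpa using Finset.sum_le_sum fun i (_ : i ∈ Finset.univ) => hY1 i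
      _ = 1 := one_div_mul_cancel (by positivity)
  exact tendsto_log_integral_one_sub_pow_div_log (by fun_prop) (fun ω => by positivity) hZ1
    (by positivity) hmean

/-- Analytic core of Theorem 2 (starting behavior): for `M` i.i.d. packets with
asymptotically exponential tails of rate `μ`, the probability of `n` successive collisions
`E[(1 - (1/M) Σ_i e^{-L_i(M-1)ν})^n]` decays as a power law of index `Mμ/((M-1)ν)`. -/
theorem stmt4 {Ω : Type*} {mΩ : MeasurableSpace Ω} (P : Measure Ω) [IsProbabilityMeasure P]
    (M : ℕ) (hM : 2 ≤ M) (μ ν : ℝ) (hμ : 0 < μ) (hν : 0 < ν)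
    (L : Fin M → Ω → ℝ) (hLm : ∀ i, Measurable (L i)) (hLnn : ∀ i ω, 0 ≤ L i ω)
    (hindep : iIndepFun L P)
    (hident : ∀ i j, IdentDistrib (L i) (L j) P P)
    (htail : ∀ i, Tendsto (fun x : ℝ => Real.log (P {ω | L i ω > x}).toReal / x) atTop
      (nhds (-μ))) :
    Tendsto (fun n : ℕ =>
        Real.log (∫ ω,
            (1 - (1 / (M : ℝ)) * ∑ i, Real.exp (-(L i ω * ((M : ℝ) - 1) * ν))) ^ n ∂P)
          / Real.log n) atTop
      (nhds (-((M : ℝ) * μ / (((M : ℝ) - 1) * ν)))) :=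
  stmt4_general (mΩ := mΩ) P M hM μ ν hμ hν L hLm hLnn hindep htail
end

section
/- Let N be a random variable taking values in the nonnegative integers with lim_{n→∞} (log P[N > n]) / (log n) = −a for some a > 0, and let (X_j)_{j≥1} be a sequence of i.i.d. nonnegative random variables, defined on the same probability space as N (with arbitrary dependence between N and the X_j), such that 0 < E[X_1] < ∞ and E[e^{θ X_1}] < ∞ for some θ > 0. Then the random sum S = Σ_{j=1}^{N} X_j satisfies lim_{t→∞} (log P[S > t]) / (log t) = −a. -/
open MeasureTheory Filter ProbabilityTheory Real Topology Asymptotics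

/-! If `N ≤ c t`, then `S > t` forces the first `⌊c t⌋` summands to reach `t`, which by the
Chernoff bound for the exponential moment has probability at most `e^{-κ t}`; if `N > C t`, then
`S ≤ t` forces the first `⌈C t⌉` summands to stay below `t`, which is exponentially unlikely as
well since `E[e^{-X}] < 1`. So `P[N > C t] - e^{-κ t} ≤ P[S > t] ≤ P[N > c t] + e^{-κ t}`, and
neither the exponential errors nor the constants `c`, `C` are visible on the scale
`log P / log t` of a power law. -/

section LogTail

variable {u v w : ℝ → ℝ} {l : ℝ}

lemma tendsto_log_div_log_of_le_of_le (hu : ∀ᶠ t in atTop, 0 < u t)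
    (huvw : ∀ᶠ t in atTop, u t ≤ v t ∧ v t ≤ w t)
    (hul : Tendsto (fun t => log (u t) / log t) atTop (𝓝 l))
    (hwl : Tendsto (fun t => log (w t) / log t) atTop (𝓝 l)) :
    Tendsto (fun t => log (v t) / log t) atTop (𝓝 l) := by
  have hlog : ∀ᶠ t : ℝ in atTop, 0 ≤ log t :=
    (eventually_ge_atTop 1).mono fun t ht => log_nonneg ht
  refine tendsto_of_tendsto_of_tendsto_of_le_of_le' hul hwl ?_ ?_ <;>
    filter_upwards [hu, huvw, hlog] with t hut huvwt hlogt
  · exact div_le_div_of_nonneg_right (log_le_log hut huvwt.1) hlogt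
  · exact div_le_div_of_nonneg_right (log_le_log (hut.trans_le huvwt.1) huvwt.2) hlogt

lemma tendsto_log_const_mul_div_log {c : ℝ} (hc : 0 < c) (hu : ∀ᶠ t in atTop, 0 < u t)
    (hul : Tendsto (fun t => log (u t) / log t) atTop (𝓝 l)) :
    Tendsto (fun t => log (c * u t) / log t) atTop (𝓝 l) := by
  have hconst : Tendsto (fun t => log c / log t) atTop (𝓝 0) :=
    tendsto_const_nhds.div_atTop tendsto_log_atTop
  refine (zero_add l ▸ hconst.add hul).congr' ?_
  filter_upwards [hu] with t hut
  rw [log_mul hc.ne' hut.ne', add_div]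

lemma tendsto_log_div_log_of_linear_bounds {c d : ℝ} (hc : 0 < c) (hd : 0 < d)
    (hv : ∀ᶠ t in atTop, c * t ≤ v t ∧ v t ≤ d * t) :
    Tendsto (fun t => log (v t) / log t) atTop (𝓝 1) := by
  have hid : Tendsto (fun t : ℝ => log t / log t) atTop (𝓝 1) :=
    tendsto_const_nhds.congr' <| (eventually_gt_atTop 1).mono fun t ht =>
      (div_self (log_pos ht).ne').symm
  have hpos : ∀ᶠ t : ℝ in atTop, 0 < t := eventually_gt_atTop 0
  exact tendsto_log_div_log_of_le_of_le (hpos.mono fun t ht => mul_pos hc ht) hv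
    (tendsto_log_const_mul_div_log hc hpos hid) (tendsto_log_const_mul_div_log hd hpos hid)

lemma tendsto_log_comp_div_log {q : ℕ → ℝ} {g : ℝ → ℕ}
    (hq : Tendsto (fun n : ℕ => log (q n) / log n) atTop (𝓝 l)) (hg : Tendsto g atTop atTop)
    (hlog : Tendsto (fun t => log (g t : ℝ) / log t) atTop (𝓝 1)) :
    Tendsto (fun t => log (q (g t)) / log t) atTop (𝓝 l) := by
  refine (mul_one l ▸ (hq.comp hg).mul hlog).congr' ?_
  filter_upwards [hg.eventually (eventually_ge_atTop 2)] with t ht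
  have : log (g t : ℝ) ≠ 0 := (log_pos (by exact_mod_cast ht)).ne'
  simp only [Function.comp_apply]
  rw [div_mul_div_cancel₀ this]

lemma eventually_natFloor_mul_bounds {c : ℝ} (hc : 0 < c) :
    ∀ᶠ t in atTop, c / 2 * t ≤ ⌊c * t⌋₊ ∧ (⌊c * t⌋₊ : ℝ) ≤ c * t := by
  filter_upwards [eventually_ge_atTop (2 / c)] with t ht
  have hct : 2 ≤ c * t := by rwa [div_le_iff₀' hc] at ht
  refine ⟨?_, Nat.floor_le (by linarith)⟩
  linarith [Nat.sub_one_lt_floor (c * t)]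

lemma eventually_natCeil_mul_bounds {c : ℝ} (hc : 0 < c) :
    ∀ᶠ t in atTop, c * t ≤ ⌈c * t⌉₊ ∧ (⌈c * t⌉₊ : ℝ) ≤ 2 * c * t := by
  filter_upwards [eventually_ge_atTop (1 / c)] with t ht
  have hct : 1 ≤ c * t := by rwa [div_le_iff₀' hc] at ht
  refine ⟨Nat.le_ceil _, ?_⟩
  linarith [Nat.ceil_lt_add_one (by linarith : (0 : ℝ) ≤ c * t)]

lemma eventually_exp_neg_mul_le {κ δ : ℝ} (hκ : 0 < κ) (hδ : 0 < δ) (hu : ∀ᶠ t in atTop, 0 < u t)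
    (hul : Tendsto (fun t => log (u t) / log t) atTop (𝓝 l)) :
    ∀ᶠ t in atTop, exp (-κ * t) ≤ δ * u t := by
  have hlin : (fun t => (1 - l) * log t - log δ) =o[atTop] id :=
    (isLittleO_log_id_atTop.const_mul_left _).sub (isLittleO_const_id_atTop _)
  filter_upwards [hu, hlin.bound hκ, hul.eventually (eventually_gt_nhds (sub_one_lt l)),
    eventually_gt_atTop 1] with t hut hlint hult ht
  have hlogt : 0 < log t := log_pos ht
  have hlogu : (l - 1) * log t ≤ log (u t) := by
    rw [lt_div_iff₀ hlogt] at hult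
    exact hult.le
  rw [Real.norm_eq_abs, Real.norm_eq_abs, id, abs_of_pos (by linarith : (0 : ℝ) < t)] at hlint
  calc exp (-κ * t) ≤ exp (log δ + log (u t)) :=
        exp_le_exp.2 (by linarith [le_abs_self ((1 - l) * log t - log δ)])
    _ = δ * u t := by rw [exp_add, exp_log hδ, exp_log hut]

lemma eventually_pos_of_tendsto_log_div_log {q : ℕ → ℝ} (hq0 : ∀ n, 0 ≤ q n) (hl : l ≠ 0)
    (hq : Tendsto (fun n : ℕ => log (q n) / log n) atTop (𝓝 l)) : ∀ᶠ n in atTop, 0 < q n := by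
  filter_upwards [hq.eventually_ne hl] with n hn
  refine (hq0 n).lt_of_ne fun hzero => hn ?_
  rw [← hzero, log_zero, zero_div]

theorem tendsto_log_div_log_of_tail_sandwich {q : ℕ → ℝ} {p : ℝ → ℝ} {c C κ : ℝ}
    (hq0 : ∀ n, 0 ≤ q n) (hl : l ≠ 0)
    (hq : Tendsto (fun n : ℕ => log (q n) / log n) atTop (𝓝 l))
    (hc : 0 < c) (hC : 0 < C) (hκ : 0 < κ)
    (hupper : ∀ᶠ t in atTop, p t ≤ q ⌊c * t⌋₊ + exp (-κ * t))
    (hlower : ∀ᶠ t in atTop, q ⌈C * t⌉₊ ≤ p t + exp (-κ * t)) :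
    Tendsto (fun t => log (p t) / log t) atTop (𝓝 l) := by
  have hfloor : Tendsto (fun t : ℝ => ⌊c * t⌋₊) atTop atTop :=
    tendsto_nat_floor_atTop.comp (tendsto_id.const_mul_atTop hc)
  have hceil : Tendsto (fun t : ℝ => ⌈C * t⌉₊) atTop atTop :=
    tendsto_nat_ceil_atTop.comp (tendsto_id.const_mul_atTop hC)
  have hqpos := eventually_pos_of_tendsto_log_div_log hq0 hl hq
  have hfloor_pos : ∀ᶠ t in atTop, 0 < q ⌊c * t⌋₊ := hfloor.eventually hqpos
  have hceil_pos : ∀ᶠ t in atTop, 0 < q ⌈C * t⌉₊ := hceil.eventually hqpos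
  have hfloor_log := tendsto_log_comp_div_log hq hfloor <|
    tendsto_log_div_log_of_linear_bounds (half_pos hc) hc (eventually_natFloor_mul_bounds hc)
  have hceil_log := tendsto_log_comp_div_log hq hceil <|
    tendsto_log_div_log_of_linear_bounds hC (by positivity) (eventually_natCeil_mul_bounds hC)
  -- `p` lies between `q ⌈C t⌉₊ / 2` and `2 q ⌊c t⌋₊`, the exponential errors being negligible.
  refine tendsto_log_div_log_of_le_of_le (u := fun t => 2⁻¹ * q ⌈C * t⌉₊)
    (w := fun t => 2 * q ⌊c * t⌋₊) (hceil_pos.mono fun t ht => by positivity) ?_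
    (tendsto_log_const_mul_div_log (by norm_num) hceil_pos hceil_log)
    (tendsto_log_const_mul_div_log two_pos hfloor_pos hfloor_log)
  filter_upwards [hupper, hlower, eventually_exp_neg_mul_le hκ one_pos hfloor_pos hfloor_log,
    eventually_exp_neg_mul_le hκ (by norm_num : (0 : ℝ) < 2⁻¹) hceil_pos hceil_log]
    with t hup hlo hexp_up hexp_lo
  constructor <;> linarith

end LogTail

section Chernoff

variable {Ω : Type*} {mΩ : MeasurableSpace Ω} {P : Measure Ω} {X : ℕ → Ω → ℝ}

lemma integrable_exp_neg_mul_of_nonneg [IsFiniteMeasure P] {Y : Ω → ℝ} (hYm : Measurable Y)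
    (hY : ∀ ω, 0 ≤ Y ω) {s : ℝ} (hs : 0 ≤ s) : Integrable (fun ω => exp (-s * Y ω)) P :=
  .of_bound (by fun_prop) 1 <| ae_of_all _ fun ω => by
    rw [norm_of_nonneg (exp_pos _).le, exp_le_one_iff]
    nlinarith [hY ω]

lemma mgf_neg_lt_one [IsProbabilityMeasure P] {Y : Ω → ℝ} (hYm : Measurable Y)
    (hY : ∀ ω, 0 ≤ Y ω) (hY0 : ¬ Y =ᵐ[P] 0) {s : ℝ} (hs : 0 < s) : mgf Y P (-s) < 1 := by
  have hint := integrable_exp_neg_mul_of_nonneg (P := P) hYm hY hs.le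
  have hgap_nonneg : 0 ≤ fun ω => 1 - exp (-s * Y ω) := fun ω => by
    rw [Pi.zero_apply, sub_nonneg, exp_le_one_iff]
    nlinarith [hY ω]
  have hgap : ∫ ω, (1 - exp (-s * Y ω)) ∂P ≠ 0 := fun hzero => hY0 <| by
    filter_upwards [(integral_eq_zero_iff_of_nonneg hgap_nonneg
      ((integrable_const 1).sub hint)).1 hzero] with ω hω
    simpa [sub_eq_zero, eq_comm (a := (1 : ℝ)), hs.ne'] using hω
  have := (integral_nonneg hgap_nonneg).lt_of_ne' hgap
  rwa [integral_sub (integrable_const 1) hint, integral_const, probReal_univ, one_smul,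
    sub_pos] at this

lemma mgf_sum_range_eq_pow (hXm : ∀ j, Measurable (X j)) (hindep : iIndepFun X P)
    (hident : ∀ j, IdentDistrib (X j) (X 0) P P) (r : ℝ) (n : ℕ) :
    mgf (fun ω => ∑ j ∈ Finset.range n, X j ω) P r = mgf (X 0) P r ^ n := by
  rw [← Finset.sum_fn, hindep.mgf_sum hXm,
    Finset.prod_congr rfl fun j _ => congrFun (mgf_congr_identDistrib (hident j)) r,
    Finset.prod_const, Finset.card_range]

variable [IsProbabilityMeasure P] (hXm : ∀ j, Measurable (X j)) (hindep : iIndepFun X P)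
  (hident : ∀ j, IdentDistrib (X j) (X 0) P P)
include hXm hindep hident

lemma exists_measureReal_sum_range_ge_le_exp {θ : ℝ} (hθ : 0 < θ)
    (hθint : Integrable (fun ω => exp (θ * X 0 ω)) P) :
    ∃ c > 0, ∃ κ > 0, ∀ (n : ℕ) (t : ℝ), n ≤ c * t →
      P.real {ω | t ≤ ∑ j ∈ Finset.range n, X j ω} ≤ exp (-κ * t) := by
  set M := mgf (X 0) P θ
  have hM : 0 < M := mgf_pos hθint
  have hint : ∀ n, Integrable (fun ω => exp (θ * (∑ j ∈ Finset.range n, X j) ω)) P := fun n =>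
    hindep.integrable_exp_mul_sum hXm fun j _ =>
      ((hident j).comp (measurable_const_mul θ).exp).integrable_iff.2 hθint
  set c := θ / (2 * (|log M| + 1))
  have hc : c * (|log M| + 1) = θ / 2 := by simp only [c]; field_simp
  refine ⟨c, by positivity, θ / 2, by positivity, fun n t hn => ?_⟩
  have hct : 0 ≤ c * t := n.cast_nonneg.trans hn
  have hrate : n * log M ≤ θ / 2 * t :=
    calc n * log M ≤ n * |log M| := mul_le_mul_of_nonneg_left (le_abs_self _) n.cast_nonneg
      _ ≤ c * t * |log M| := mul_le_mul_of_nonneg_right hn (abs_nonneg _)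
      _ ≤ c * t * (|log M| + 1) := by nlinarith
      _ = θ / 2 * t := by rw [← hc]; ring
  calc P.real {ω | t ≤ ∑ j ∈ Finset.range n, X j ω}
      ≤ exp (-θ * t) * M ^ n := by
        have h := measure_ge_le_exp_mul_mgf t hθ.le (hint n)
        rw [Finset.sum_fn, mgf_sum_range_eq_pow hXm hindep hident] at h
        simpa using h
    _ = exp (-θ * t + n * log M) := by rw [exp_add, exp_nat_mul, exp_log hM]
    _ ≤ exp (-(θ / 2) * t) := exp_le_exp.2 (by linarith)

lemma exists_measureReal_sum_range_le_le_exp (hXnn : ∀ j ω, 0 ≤ X j ω) (hX0 : ¬ X 0 =ᵐ[P] 0)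
    {κ : ℝ} (hκ : 0 < κ) :
    ∃ C > 0, ∀ (n : ℕ) (t : ℝ), C * t ≤ n →
      P.real {ω | ∑ j ∈ Finset.range n, X j ω ≤ t} ≤ exp (-κ * t) := by
  set ρ := mgf (X 0) P (-1)
  have hρ : 0 < ρ := by
    have := integrable_exp_neg_mul_of_nonneg (P := P) (hXm 0) (hXnn 0) zero_le_one
    exact mgf_pos (by simpa using this)
  have hlogρ : log ρ < 0 := log_neg hρ (mgf_neg_lt_one (hXm 0) (hXnn 0) hX0 one_pos)
  refine ⟨(1 + κ) / -log ρ, div_pos (by linarith) (neg_pos.2 hlogρ), fun n t hn => ?_⟩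
  have hrate : n * log ρ ≤ -(1 + κ) * t :=
    calc n * log ρ ≤ (1 + κ) / -log ρ * t * log ρ := mul_le_mul_of_nonpos_right hn hlogρ.le
      _ = -(1 + κ) * t := by field_simp [hlogρ.ne]
  have hint := integrable_exp_neg_mul_of_nonneg (P := P)
    (Finset.measurable_sum (Finset.range n) fun j _ => hXm j)
    (fun ω => Finset.sum_nonneg fun j _ => hXnn j ω) zero_le_one
  calc P.real {ω | ∑ j ∈ Finset.range n, X j ω ≤ t}
      ≤ exp t * ρ ^ n := by
        have h := measure_le_le_exp_mul_mgf t (by norm_num) hint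
        rw [mgf_sum_range_eq_pow hXm hindep hident] at h
        simpa using h
    _ = exp (t + n * log ρ) := by rw [exp_add, exp_nat_mul, exp_log hρ]
    _ ≤ exp (-κ * t) := exp_le_exp.2 (by linarith)

end Chernoff

section RandomSum

variable {Ω : Type*} {mΩ : MeasurableSpace Ω} {P : Measure Ω} [IsFiniteMeasure P]
  {X : ℕ → Ω → ℝ} (hXnn : ∀ j ω, 0 ≤ X j ω) (N : Ω → ℕ) (n : ℕ) (t : ℝ)
include hXnn

lemma measureReal_randomSum_tail_le :
    P.real {ω | t < ∑ j ∈ Finset.range (N ω), X j ω}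
      ≤ P.real {ω | n < N ω} + P.real {ω | t ≤ ∑ j ∈ Finset.range n, X j ω} := by
  refine (measureReal_mono fun ω (hω : t < _) => ?_).trans (measureReal_union_le _ _)
  by_cases hN : n < N ω
  · exact Or.inl hN
  · exact Or.inr <| hω.le.trans <| Finset.sum_le_sum_of_subset_of_nonneg
      (Finset.range_subset_range.2 (not_lt.1 hN)) fun j _ _ => hXnn j ω

lemma measureReal_index_tail_le :
    P.real {ω | n < N ω}
      ≤ P.real {ω | t < ∑ j ∈ Finset.range (N ω), X j ω}
        + P.real {ω | ∑ j ∈ Finset.range n, X j ω ≤ t} := by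
  refine (measureReal_mono fun ω (hN : n < N ω) => ?_).trans (measureReal_union_le _ _)
  by_cases hSn : ∑ j ∈ Finset.range n, X j ω ≤ t
  · exact Or.inr hSn
  · exact Or.inl <| (not_le.1 hSn).trans_le <| Finset.sum_le_sum_of_subset_of_nonneg
      (Finset.range_subset_range.2 hN.le) fun j _ _ => hXnn j ω

end RandomSum

theorem stmt6_general {Ω : Type*} {mΩ : MeasurableSpace Ω} (P : Measure Ω) [IsProbabilityMeasure P]
    (N : Ω → ℕ) (a : ℝ) (ha : 0 < a)
    (hNtail : Tendsto (fun n : ℕ => Real.log (P {ω | N ω > n}).toReal / Real.log n) atTop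
      (nhds (-a)))
    (X : ℕ → Ω → ℝ) (hXm : ∀ j, Measurable (X j)) (hXnn : ∀ j ω, 0 ≤ X j ω)
    (hindep : iIndepFun X P)
    (hident : ∀ j, IdentDistrib (X j) (X 0) P P)
    (hmean : 0 < ∫ ω, X 0 ω ∂P)
    (hmgf : ∃ θ > 0, Integrable (fun ω => Real.exp (θ * X 0 ω)) P) :
    Tendsto (fun t : ℝ =>
        Real.log (P {ω | (∑ j ∈ Finset.range (N ω), X j ω) > t}).toReal / Real.log t)
      atTop (nhds (-a)) := by
  obtain ⟨θ, hθ, hθint⟩ := hmgf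
  have hX0 : ¬ X 0 =ᵐ[P] 0 := fun h => hmean.ne' (integral_eq_zero_of_ae h)
  obtain ⟨c, hc, κ, hκ, hupper⟩ :=
    exists_measureReal_sum_range_ge_le_exp hXm hindep hident hθ hθint
  obtain ⟨C, hC, hlower⟩ := exists_measureReal_sum_range_le_le_exp hXm hindep hident hXnn hX0 hκ
  refine tendsto_log_div_log_of_tail_sandwich (q := fun n => P.real {ω | n < N ω})
    (fun n => measureReal_nonneg) (neg_ne_zero.2 ha.ne') hNtail hc hC hκ ?_ ?_
  · filter_upwards [eventually_ge_atTop 0] with t ht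
    exact (measureReal_randomSum_tail_le hXnn N _ t).trans
      (add_le_add le_rfl (hupper _ t (Nat.floor_le (by positivity))))
  · exact .of_forall fun t => (measureReal_index_tail_le hXnn N _ t).trans
      (add_le_add le_rfl (hlower _ t (Nat.le_ceil _)))

/-- Random-sum tail-transfer principle: if `N` has a power law tail of index `a` and
`(X_j)` are i.i.d. nonnegative light-tailed variables with positive finite mean
(with arbitrary dependence between `N` and the `X_j`), then `S = Σ_{j=1}^N X_j`
has the same logarithmic power law tail. -/
theorem stmt6 {Ω : Type*} {mΩ : MeasurableSpace Ω} (P : Measure Ω) [IsProbabilityMeasure P]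
    (N : Ω → ℕ) (hN : Measurable N) (a : ℝ) (ha : 0 < a)
    (hNtail : Tendsto (fun n : ℕ => Real.log (P {ω | N ω > n}).toReal / Real.log n) atTop
      (nhds (-a)))
    (X : ℕ → Ω → ℝ) (hXm : ∀ j, Measurable (X j)) (hXnn : ∀ j ω, 0 ≤ X j ω)
    (hindep : iIndepFun X P)
    (hident : ∀ j, IdentDistrib (X j) (X 0) P P)
    (hint : Integrable (X 0) P) (hmean : 0 < ∫ ω, X 0 ω ∂P)
    (hmgf : ∃ θ > 0, Integrable (fun ω => Real.exp (θ * X 0 ω)) P) :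
    Tendsto (fun t : ℝ =>
        Real.log (P {ω | (∑ j ∈ Finset.range (N ω), X j ω) > t}).toReal / Real.log t)
      atTop (nhds (-a)) :=
  stmt6_general (mΩ := mΩ) P N a ha hNtail X hXm hXnn hindep hident hmean hmgf
end

section
/- Let 0 < q < 1, C > 0, c > 0. Let X be a random variable taking values in the positive integers with P[X ≥ j+1] ≤ q^j for all integers j ≥ 1, and let (Y_j)_{j≥1} be nonnegative random variables on the same probability space (with arbitrary joint dependence) such that P[Y_j > y] ≤ C e^{−cy} for every j ≥ 1 and every y ≥ 0. Then there exist constants K > 0 and η > 0 such that P[Σ_{j=1}^{X} Y_j > n] ≤ K e^{−η√n} for all n ≥ 1. -/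
open MeasureTheory Filter

/-- Lemma 1 (eq. (10)): a Weibull-type bound `P[Σ_{j=1}^X Y_j > n] ≤ K e^{-η√n}` for a
random sum with geometrically dominated length `X` and exponentially bounded terms `Y_j`. -/
theorem stmt7 {Ω : Type*} {mΩ : MeasurableSpace Ω} (P : Measure Ω) [IsProbabilityMeasure P]
    (q C c : ℝ) (hq0 : 0 < q) (hq1 : q < 1) (hC : 0 < C) (hc : 0 < c)
    (X : Ω → ℕ) (hXm : Measurable X) (hXpos : ∀ ω, 1 ≤ X ω)
    (hXtail : ∀ j : ℕ, 1 ≤ j → (P {ω | j + 1 ≤ X ω}).toReal ≤ q ^ j)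
    (Y : ℕ → Ω → ℝ) (hYm : ∀ j, Measurable (Y j)) (hYnn : ∀ j ω, 0 ≤ Y j ω)
    (hYtail : ∀ j : ℕ, 1 ≤ j → ∀ y : ℝ, 0 ≤ y →
      (P {ω | Y j ω > y}).toReal ≤ C * Real.exp (-c * y)) :
    ∃ K > 0, ∃ η > 0, ∀ n : ℕ, 1 ≤ n →
      (P {ω | (∑ j ∈ Finset.Icc 1 (X ω), Y j ω) > (n : ℝ)}).toReal ≤
        K * Real.exp (-η * Real.sqrt n) := by
  have hlogq : Real.log q < 0 := Real.log_neg hq0 hq1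
  set η : ℝ := min (-Real.log q) (c / 4) with hη_def
  have hη : 0 < η := lt_min (by linarith) (by linarith)
  refine ⟨1 + 8 * C / c, by positivity, η, hη, ?_⟩
  intro n hn
  set s : ℝ := Real.sqrt n with hs_def
  have hn1 : (1 : ℝ) ≤ (n : ℝ) := by exact_mod_cast hn
  have hs1 : 1 ≤ s := by
    rw [hs_def, show (1 : ℝ) = Real.sqrt 1 by simp]
    exact Real.sqrt_le_sqrt hn1
  have hs0 : 0 < s := by linarith
  set m : ℕ := ⌈s⌉₊ with hm_def
  have hm1 : 1 ≤ m := Nat.one_le_ceil_iff.mpr hs0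
  have hmlb : s ≤ (m : ℝ) := Nat.le_ceil s
  have hmub : (m : ℝ) ≤ 2 * s := by
    have := Nat.ceil_lt_add_one (le_of_lt hs0)
    linarith
  have hm0 : (0 : ℝ) < m := by linarith
  set t : ℝ := (n : ℝ) / m with ht_def
  have ht0 : 0 ≤ t := by positivity
  have hn_eq : (n : ℝ) = s * s := (Real.mul_self_sqrt (by positivity)).symm
  -- set inclusion
  have hsub : {ω | (∑ j ∈ Finset.Icc 1 (X ω), Y j ω) > (n : ℝ)} ⊆
      {ω | m + 1 ≤ X ω} ∪ ⋃ j ∈ Finset.Icc 1 m, {ω | Y j ω > t} := by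
    intro ω hω
    simp only [Set.mem_setOf_eq] at hω
    by_cases hX : m + 1 ≤ X ω
    · exact Or.inl hX
    · right
      push_neg at hX
      have hXle : X ω ≤ m := Nat.lt_succ_iff.mp hX
      by_contra hY
      simp only [Set.mem_iUnion, Set.mem_setOf_eq, not_exists, not_lt] at hY
      have hsum : (∑ j ∈ Finset.Icc 1 (X ω), Y j ω) ≤ (X ω : ℝ) * t := by
        calc (∑ j ∈ Finset.Icc 1 (X ω), Y j ω) ≤ ∑ _j ∈ Finset.Icc 1 (X ω), t := by
              refine Finset.sum_le_sum fun j hj => ?_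
              refine hY j ?_
              simp only [Finset.mem_Icc] at hj ⊢
              exact ⟨hj.1, hj.2.trans hXle⟩
          _ = (X ω : ℝ) * t := by
              rw [Finset.sum_const, Nat.card_Icc]
              simp [nsmul_eq_mul]
      have hXm' : ((X ω : ℝ)) ≤ (m : ℝ) := by exact_mod_cast hXle
      have hmt : (m : ℝ) * t = (n : ℝ) := by
        rw [ht_def]; field_simp
      nlinarith [ht0]
  -- measure bound in ℝ≥0∞
  have hmeas : P {ω | (∑ j ∈ Finset.Icc 1 (X ω), Y j ω) > (n : ℝ)} ≤
      P {ω | m + 1 ≤ X ω} + ∑ j ∈ Finset.Icc 1 m, P {ω | Y j ω > t} := by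
    calc P {ω | (∑ j ∈ Finset.Icc 1 (X ω), Y j ω) > (n : ℝ)}
        ≤ P ({ω | m + 1 ≤ X ω} ∪ ⋃ j ∈ Finset.Icc 1 m, {ω | Y j ω > t}) :=
          measure_mono hsub
      _ ≤ P {ω | m + 1 ≤ X ω} + P (⋃ j ∈ Finset.Icc 1 m, {ω | Y j ω > t}) :=
          measure_union_le _ _
      _ ≤ P {ω | m + 1 ≤ X ω} + ∑ j ∈ Finset.Icc 1 m, P {ω | Y j ω > t} := by
          gcongr
          exact measure_biUnion_finset_le _ _
  have hfinsum : (∑ j ∈ Finset.Icc 1 m, P {ω | Y j ω > t}) ≠ ⊤ :=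
    (ENNReal.sum_lt_top.mpr fun j _ => measure_lt_top P _).ne
  have hreal : (P {ω | (∑ j ∈ Finset.Icc 1 (X ω), Y j ω) > (n : ℝ)}).toReal ≤
      (P {ω | m + 1 ≤ X ω}).toReal + ∑ j ∈ Finset.Icc 1 m, (P {ω | Y j ω > t}).toReal := by
    have h := ENNReal.toReal_mono (by
      exact ENNReal.add_ne_top.mpr ⟨measure_ne_top P _, hfinsum⟩) hmeas
    rwa [ENNReal.toReal_add (measure_ne_top P _) hfinsum,
      ENNReal.toReal_sum (fun j _ => measure_ne_top P _)] at h
  -- first term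
  have hB : (P {ω | m + 1 ≤ X ω}).toReal ≤ Real.exp (Real.log q * s) := by
    calc (P {ω | m + 1 ≤ X ω}).toReal ≤ q ^ m := hXtail m hm1
      _ = Real.exp (Real.log q) ^ m := by rw [Real.exp_log hq0]
      _ = Real.exp ((m : ℝ) * Real.log q) := by rw [← Real.exp_nat_mul]
      _ ≤ Real.exp (s * Real.log q) := by
          apply Real.exp_le_exp.mpr
          nlinarith
      _ = Real.exp (Real.log q * s) := by ring_nf
  -- second term
  have hsumD : (∑ j ∈ Finset.Icc 1 m, (P {ω | Y j ω > t}).toReal) ≤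
      (m : ℝ) * (C * Real.exp (-c * t)) := by
    calc (∑ j ∈ Finset.Icc 1 m, (P {ω | Y j ω > t}).toReal)
        ≤ ∑ _j ∈ Finset.Icc 1 m, C * Real.exp (-c * t) :=
          Finset.sum_le_sum fun j hj => hYtail j (Finset.mem_Icc.mp hj).1 t ht0
      _ = (m : ℝ) * (C * Real.exp (-c * t)) := by
          rw [Finset.sum_const, Nat.card_Icc]
          simp [nsmul_eq_mul]
  have htlb : s / 2 ≤ t := by
    rw [ht_def, le_div_iff₀ hm0]
    nlinarith
  have hexp2 : Real.exp (-c * t) ≤ Real.exp (-(c / 2) * s) :=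
    Real.exp_le_exp.mpr (by nlinarith)
  have hmexp : (m : ℝ) ≤ 8 * Real.exp ((c / 4) * s) / c := by
    rw [le_div_iff₀ hc]
    nlinarith [Real.add_one_le_exp ((c / 4) * s), Real.exp_pos ((c / 4) * s)]
  have h2 : (m : ℝ) * (C * Real.exp (-c * t)) ≤ (8 * C / c) * Real.exp (-(c / 4) * s) := by
    have e1 : Real.exp ((c / 4) * s) * Real.exp (-(c / 2) * s) = Real.exp (-(c / 4) * s) := by
      rw [← Real.exp_add]; ring_nf
    calc (m : ℝ) * (C * Real.exp (-c * t))
        ≤ (8 * Real.exp ((c / 4) * s) / c) * (C * Real.exp (-(c / 2) * s)) := by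
          apply mul_le_mul hmexp ?_ (by positivity) (by positivity)
          exact mul_le_mul_of_nonneg_left hexp2 (le_of_lt hC)
      _ = (8 * C / c) * (Real.exp ((c / 4) * s) * Real.exp (-(c / 2) * s)) := by ring
      _ = (8 * C / c) * Real.exp (-(c / 4) * s) := by rw [e1]
  -- combine
  have hηa : Real.exp (Real.log q * s) ≤ Real.exp (-η * s) := by
    apply Real.exp_le_exp.mpr
    have h : η ≤ -Real.log q := by rw [hη_def]; exact min_le_left _ _
    have h' : Real.log q ≤ -η := by linarith
    exact mul_le_mul_of_nonneg_right h' hs0.le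
  have hηb : Real.exp (-(c / 4) * s) ≤ Real.exp (-η * s) := by
    apply Real.exp_le_exp.mpr
    have h : η ≤ c / 4 := by rw [hη_def]; exact min_le_right _ _
    have h' : -(c / 4) ≤ -η := by linarith
    exact mul_le_mul_of_nonneg_right h' hs0.le
  have hfinal : (P {ω | (∑ j ∈ Finset.Icc 1 (X ω), Y j ω) > (n : ℝ)}).toReal ≤
      (1 + 8 * C / c) * Real.exp (-η * s) := by
    have h8 : (0 : ℝ) ≤ 8 * C / c := by positivity
    calc (P {ω | (∑ j ∈ Finset.Icc 1 (X ω), Y j ω) > (n : ℝ)}).toReal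
        ≤ (P {ω | m + 1 ≤ X ω}).toReal + ∑ j ∈ Finset.Icc 1 m, (P {ω | Y j ω > t}).toReal :=
          hreal
      _ ≤ Real.exp (Real.log q * s) + (8 * C / c) * Real.exp (-(c / 4) * s) := by
          have := hsumD.trans h2
          linarith
      _ ≤ Real.exp (-η * s) + (8 * C / c) * Real.exp (-η * s) := by
          have := mul_le_mul_of_nonneg_left hηb h8
          linarith
      _ = (1 + 8 * C / c) * Real.exp (-η * s) := by ring
  exact hfinal
end

section
/- Let L be a nonnegative random variable with an asymptotically exponential tail with decay rate μ > 0, let M ≥ 2 be an integer and ν > 0. Then lim_{n→∞} (log E[(1 − (M−1)/(Mn) − (1/M) e^{−L(M−1)ν})^n]) / (log n) = −μ / ((M−1)ν). -/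
open MeasureTheory Filter Real Topology

/-!
Write `p = 1/M`, `c = (M-1)ν` and `y = exp (-c L)`; the integrand is then `(1 - (1-p)/n - p y)^n`.
On the event `{L > log n / c}` we have `y ≤ 1/n`, so the base is at least `1 - 1/n` and the
integrand at least `(1 - 1/n)^n → e⁻¹`; hence `E ≥ (1 - 1/n)^n P[L > log n / c] = n^(-μ/c + o(1))`.
Conversely the base is at most `exp (-p y)`, so off the event `{L > s log n / c}`, `0 < s < 1`,
the integrand is at most `exp (-p n^(1-s))`, which decays faster than any power of `n`. Hence
`E ≤ P[L > s log n / c] + exp (-p n^(1-s)) = n^(-sμ/c + o(1))`, and letting `s → 1` closes the gap.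
-/

lemma tendsto_comp_const_mul_div {α : Type*} {F : Filter α} {f : ℝ → ℝ} {g : α → ℝ} {l a : ℝ}
    (hf : Tendsto (fun x => f x / x) atTop (𝓝 l)) (hg : Tendsto g F atTop) (ha : 0 < a) :
    Tendsto (fun i => f (a * g i) / g i) F (𝓝 (l * a)) := by
  refine ((hf.comp (hg.const_mul_atTop ha)).mul_const a).congr' ?_
  filter_upwards [hg.eventually_gt_atTop 0] with i hi
  simp only [Function.comp_apply]
  field_simp

lemma eventually_pos_of_tendsto_log_div {T : ℝ → ℝ} {l : ℝ} (hT : ∀ x, 0 ≤ T x) (hl : l ≠ 0)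
    (h : Tendsto (fun x => log (T x) / x) atTop (𝓝 l)) : ∀ᶠ x in atTop, 0 < T x := by
  filter_upwards [h.eventually_ne hl] with x hx
  refine (hT x).lt_of_ne' fun h0 => hx ?_
  simp [h0]

lemma eventually_le_rpow_of_tendsto_log_div {T : ℝ → ℝ} {l a b : ℝ}
    (h : Tendsto (fun x => log (T x) / x) atTop (𝓝 l)) (ha : 0 < a) (hb : l * a < b) :
    ∀ᶠ n : ℕ in atTop, T (a * log n) ≤ (n : ℝ) ^ b := by
  have hlog : Tendsto (fun n : ℕ => log (n : ℝ)) atTop atTop :=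
    tendsto_log_atTop.comp tendsto_natCast_atTop_atTop
  filter_upwards [(tendsto_comp_const_mul_div h hlog ha).eventually_lt_const hb,
    hlog.eventually_gt_atTop 0, eventually_gt_atTop 0] with n hlt hlogpos hn
  rcases le_or_gt (T (a * log n)) 0 with hT | hT
  · exact hT.trans (by positivity)
  · have : log (T (a * log n)) < b * log n := (div_lt_iff₀ hlogpos).1 hlt
    rw [← exp_log hT, rpow_def_of_pos (by exact_mod_cast hn)]
    exact exp_le_exp.2 (by linarith)

lemma eventually_exp_neg_mul_rpow_le_rpow {p θ : ℝ} (hp : 0 < p) (hθ : 0 < θ) (b : ℝ) :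
    ∀ᶠ n : ℕ in atTop, exp (-(p * (n : ℝ) ^ θ)) ≤ (n : ℝ) ^ b := by
  have h := (tendsto_exp_mul_div_rpow_atTop (-b / θ) p hp).comp
    ((tendsto_rpow_atTop hθ).comp tendsto_natCast_atTop_atTop)
  filter_upwards [h.eventually_ge_atTop 1, eventually_gt_atTop 0] with n h1 hn
  have hn' : (0 : ℝ) < n := by exact_mod_cast hn
  have hpow : (n : ℝ) ^ (-b) ≤ exp (p * (n : ℝ) ^ θ) := by
    have h1' : ((n : ℝ) ^ θ) ^ (-b / θ) ≤ exp (p * (n : ℝ) ^ θ) := by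
      simpa [one_le_div₀ (rpow_pos_of_pos (rpow_pos_of_pos hn' θ) _)] using h1
    rwa [← rpow_mul hn'.le, mul_div_cancel₀ _ hθ.ne'] at h1'
  calc exp (-(p * (n : ℝ) ^ θ)) = (exp (p * (n : ℝ) ^ θ))⁻¹ := exp_neg _
    _ ≤ ((n : ℝ) ^ (-b))⁻¹ := inv_anti₀ (by positivity) hpow
    _ = (n : ℝ) ^ b := by rw [rpow_neg hn'.le, inv_inv]

lemma tendsto_log_one_sub_inv_pow_div_log :
    Tendsto (fun n : ℕ => log ((1 - 1 / (n : ℝ)) ^ n) / log n) atTop (𝓝 0) := by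
  have h := (tendsto_one_add_div_pow_exp (-1)).log (exp_pos _).ne'
  simp only [neg_div, ← sub_eq_add_neg] at h
  exact h.div_atTop (tendsto_log_atTop.comp tendsto_natCast_atTop_atTop)

lemma log_div_log_lt_of_lt_rpow {u x b : ℝ} (hu : 0 < u) (hx : 1 < x) (h : u < x ^ b) :
    log u / log x < b := by
  rw [div_lt_iff₀ (log_pos hx), ← log_rpow (by linarith)]
  exact log_lt_log hu h

noncomputable def alohaBase (p : ℝ) (n : ℕ) (y : ℝ) : ℝ := 1 - (1 - p) / n - p * y

section AlohaBase

variable {p y : ℝ} {n : ℕ}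

lemma alohaBase_nonneg (hp0 : 0 ≤ p) (hp1 : p ≤ 1) (hn : n ≠ 0) (hy : y ≤ 1) :
    0 ≤ alohaBase p n y := by
  have : (1 - p) / n ≤ 1 - p :=
    div_le_self (by linarith) (Nat.one_le_cast.2 (Nat.one_le_iff_ne_zero.2 hn))
  unfold alohaBase
  nlinarith

lemma alohaBase_le_exp (hp1 : p ≤ 1) : alohaBase p n y ≤ exp (-(p * y)) := by
  have : 0 ≤ (1 - p) / n := div_nonneg (by linarith) n.cast_nonneg
  unfold alohaBase
  linarith [one_sub_le_exp_neg (p * y)]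

lemma one_sub_inv_le_alohaBase (hp0 : 0 ≤ p) (hy : y ≤ 1 / n) :
    1 - 1 / n ≤ alohaBase p n y := by
  have : alohaBase p n y - (1 - 1 / n) = p * (1 / n - y) := by unfold alohaBase; ring
  nlinarith [mul_nonneg hp0 (sub_nonneg.2 hy)]

lemma alohaBase_pow_mem_Icc (hp0 : 0 ≤ p) (hp1 : p ≤ 1) (hn : n ≠ 0) (hy0 : 0 ≤ y)
    (hy1 : y ≤ 1) : alohaBase p n y ^ n ∈ Set.Icc 0 1 := by
  have h0 := alohaBase_nonneg hp0 hp1 hn hy1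
  refine ⟨pow_nonneg h0 n, pow_le_one₀ h0 ((alohaBase_le_exp hp1).trans ?_)⟩
  exact exp_le_one_iff.2 (by nlinarith)

end AlohaBase

lemma exp_neg_mul_le_one {c x : ℝ} (hc : 0 ≤ c) (hx : 0 ≤ x) : exp (-(c * x)) ≤ 1 :=
  exp_le_one_iff.2 (neg_nonpos.2 (mul_nonneg hc hx))

section Integral

variable {Ω : Type*} {mΩ : MeasurableSpace Ω} (P : Measure Ω) [IsProbabilityMeasure P]
  {L : Ω → ℝ} {p c μ : ℝ} {n : ℕ}

lemma integrable_alohaBase_pow (hL : Measurable L) (hL0 : ∀ ω, 0 ≤ L ω) (hp0 : 0 ≤ p)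
    (hp1 : p ≤ 1) (hc : 0 ≤ c) (hn : n ≠ 0) :
    Integrable (fun ω => alohaBase p n (exp (-(c * L ω))) ^ n) P := by
  refine Integrable.of_bound (by unfold alohaBase; fun_prop) 1 (ae_of_all _ fun ω => ?_)
  obtain ⟨h0, h1⟩ :=
    alohaBase_pow_mem_Icc hp0 hp1 hn (exp_pos _).le (exp_neg_mul_le_one hc (hL0 ω))
  rwa [norm_of_nonneg h0]

lemma one_sub_inv_pow_mul_tail_le_integral (hL : Measurable L) (hL0 : ∀ ω, 0 ≤ L ω)
    (hp0 : 0 ≤ p) (hp1 : p ≤ 1) (hc : 0 < c) (hn : n ≠ 0) :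
    (1 - 1 / (n : ℝ)) ^ n * (P {ω | L ω > c⁻¹ * log n}).toReal
      ≤ ∫ ω, alohaBase p n (exp (-(c * L ω))) ^ n ∂P := by
  set S := {ω | L ω > c⁻¹ * log n}
  have hS : MeasurableSet S := measurableSet_lt measurable_const hL
  have hn' : (1 : ℝ) ≤ n := Nat.one_le_cast.2 (Nat.one_le_iff_ne_zero.2 hn)
  have hle : ∀ ω, S.indicator (fun _ => (1 - 1 / (n : ℝ)) ^ n) ω
      ≤ alohaBase p n (exp (-(c * L ω))) ^ n := by
    intro ω
    by_cases hω : ω ∈ S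
    · rw [Set.indicator_of_mem hω]
      have hy : exp (-(c * L ω)) ≤ 1 / n := by
        rw [one_div, ← exp_log (by linarith : (0 : ℝ) < n), ← exp_neg]
        exact exp_le_exp.2 (by have := (inv_mul_lt_iff₀ hc).1 hω; linarith)
      have h1 : (0 : ℝ) ≤ 1 - 1 / n := sub_nonneg.2 (div_le_one_of_le₀ hn' (by linarith))
      exact pow_le_pow_left₀ h1 (one_sub_inv_le_alohaBase hp0 hy) n
    · rw [Set.indicator_of_notMem hω]
      exact (alohaBase_pow_mem_Icc hp0 hp1 hn (exp_pos _).le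
        (exp_neg_mul_le_one hc.le (hL0 ω))).1
  calc (1 - 1 / (n : ℝ)) ^ n * (P S).toReal
      = ∫ ω, S.indicator (fun _ => (1 - 1 / (n : ℝ)) ^ n) ω ∂P := by
        rw [integral_indicator_const _ hS, smul_eq_mul, mul_comm, measureReal_def]
    _ ≤ _ := integral_mono ((integrable_const _).indicator hS)
        (integrable_alohaBase_pow P hL hL0 hp0 hp1 hc.le hn) hle

lemma integral_le_tail_add_exp (hL : Measurable L) (hL0 : ∀ ω, 0 ≤ L ω)
    (hp0 : 0 ≤ p) (hp1 : p ≤ 1) (hc : 0 ≤ c) (hn : n ≠ 0) (t : ℝ) :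
    ∫ ω, alohaBase p n (exp (-(c * L ω))) ^ n ∂P
      ≤ (P {ω | L ω > t}).toReal + exp (-(n * (p * exp (-(c * t))))) := by
  set S := {ω | L ω > t}
  set R := exp (-(n * (p * exp (-(c * t)))))
  have hS : MeasurableSet S := measurableSet_lt measurable_const hL
  have hle : ∀ ω, alohaBase p n (exp (-(c * L ω))) ^ n
      ≤ S.indicator (fun _ => (1 : ℝ)) ω + R := by
    intro ω
    have hIcc := alohaBase_pow_mem_Icc hp0 hp1 hn (exp_pos _).le
      (exp_neg_mul_le_one hc (hL0 ω))
    by_cases hω : ω ∈ S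
    · rw [Set.indicator_of_mem hω]
      linarith [hIcc.2, (exp_pos _ : 0 < R)]
    · rw [Set.indicator_of_notMem hω, zero_add]
      have hLt : L ω ≤ t := not_lt.1 hω
      have hy : exp (-(c * t)) ≤ exp (-(c * L ω)) :=
        exp_le_exp.2 (neg_le_neg (mul_le_mul_of_nonneg_left hLt hc))
      calc _ ≤ exp (-(p * exp (-(c * L ω)))) ^ n :=
            pow_le_pow_left₀ (alohaBase_nonneg hp0 hp1 hn (exp_neg_mul_le_one hc (hL0 ω)))
              (alohaBase_le_exp hp1) n
        _ = exp (-(n * (p * exp (-(c * L ω))))) := by rw [← exp_nat_mul]; ring_nf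
        _ ≤ R := exp_le_exp.2 (by nlinarith [mul_le_mul_of_nonneg_left hy hp0])
  calc _ ≤ ∫ ω, (S.indicator (fun _ => (1 : ℝ)) ω + R) ∂P :=
        integral_mono (integrable_alohaBase_pow P hL hL0 hp0 hp1 hc hn)
          (((integrable_const _).indicator hS).add (integrable_const _)) hle
    _ = (P S).toReal + R := by
        rw [integral_add ((integrable_const _).indicator hS) (integrable_const _),
          integral_indicator_const _ hS, integral_const, smul_eq_mul, mul_one, measureReal_def]
        simp

lemma eventually_lt_log_integral_div_log (hL : Measurable L) (hL0 : ∀ ω, 0 ≤ L ω)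
    (hp0 : 0 ≤ p) (hp1 : p ≤ 1) (hc : 0 < c) (hμ : 0 < μ)
    (htail : Tendsto (fun x : ℝ => log (P {ω | L ω > x}).toReal / x) atTop (𝓝 (-μ)))
    {b : ℝ} (hb : b < -(μ / c)) :
    ∀ᶠ n : ℕ in atTop, 0 < ∫ ω, alohaBase p n (exp (-(c * L ω))) ^ n ∂P ∧
      b < log (∫ ω, alohaBase p n (exp (-(c * L ω))) ^ n ∂P) / log n := by
  set T : ℝ → ℝ := fun x => (P {ω | L ω > x}).toReal
  have hlog : Tendsto (fun n : ℕ => log (n : ℝ)) atTop atTop :=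
    tendsto_log_atTop.comp tendsto_natCast_atTop_atTop
  have hTpos : ∀ᶠ n : ℕ in atTop, 0 < T (c⁻¹ * log n) :=
    (hlog.const_mul_atTop (inv_pos.2 hc)).eventually
      (eventually_pos_of_tendsto_log_div (fun _ => ENNReal.toReal_nonneg) (neg_ne_zero.2 hμ.ne')
        htail)
  have hpow : ∀ᶠ n : ℕ in atTop, 0 < (1 - 1 / (n : ℝ)) ^ n := by
    filter_upwards [eventually_gt_atTop 1] with n hn
    have : 1 / (n : ℝ) < 1 := (div_lt_one (by positivity)).2 (by exact_mod_cast hn)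
    exact pow_pos (by linarith) n
  have hlim : Tendsto (fun n : ℕ => log ((1 - 1 / (n : ℝ)) ^ n * T (c⁻¹ * log n)) / log n)
      atTop (𝓝 (-(μ / c))) := by
    have h := tendsto_log_one_sub_inv_pow_div_log.add
      (tendsto_comp_const_mul_div htail hlog (inv_pos.2 hc))
    rw [zero_add, neg_mul, ← div_eq_mul_inv] at h
    refine h.congr' ?_
    filter_upwards [hTpos, hpow] with n hT hpow
    rw [log_mul hpow.ne' hT.ne', add_div]
  filter_upwards [hlim.eventually_const_lt hb, hTpos, hpow, eventually_gt_atTop 1]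
    with n hlt hT hpow hn
  have hlow := one_sub_inv_pow_mul_tail_le_integral P hL hL0 hp0 hp1 hc (by omega : n ≠ 0)
  have hpos := mul_pos hpow hT
  refine ⟨hpos.trans_le hlow, hlt.trans_le ?_⟩
  exact div_le_div_of_nonneg_right (log_le_log hpos hlow) (log_nonneg (by exact_mod_cast hn.le))

lemma eventually_integral_lt_rpow (hL : Measurable L) (hL0 : ∀ ω, 0 ≤ L ω)
    (hp0 : 0 < p) (hp1 : p ≤ 1) (hc : 0 < c)
    (htail : Tendsto (fun x : ℝ => log (P {ω | L ω > x}).toReal / x) atTop (𝓝 (-μ)))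
    {s b : ℝ} (hs0 : 0 < s) (hs1 : s < 1) (hb : -μ * (s / c) < b) :
    ∀ᶠ n : ℕ in atTop, ∫ ω, alohaBase p n (exp (-(c * L ω))) ^ n ∂P < (n : ℝ) ^ b := by
  obtain ⟨b', hb', hb'b⟩ := exists_between hb
  have h2 : ∀ᶠ n : ℕ in atTop, 2 < (n : ℝ) ^ (b - b') :=
    ((tendsto_rpow_atTop (sub_pos.2 hb'b)).comp tendsto_natCast_atTop_atTop).eventually_gt_atTop 2
  filter_upwards [eventually_le_rpow_of_tendsto_log_div htail (div_pos hs0 hc) hb',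
    eventually_exp_neg_mul_rpow_le_rpow hp0 (sub_pos.2 hs1) b', h2, eventually_gt_atTop 0]
    with n hT hR h2 hn
  have hn' : (0 : ℝ) < n := by exact_mod_cast hn
  have hexp : (n : ℝ) * (p * exp (-(c * (s / c * log n)))) = p * (n : ℝ) ^ (1 - s) := by
    have hcs : c * (s / c * log n) = log n * s := by field_simp
    rw [rpow_sub hn', rpow_one, rpow_def_of_pos hn', hcs, exp_neg]
    ring
  calc _ ≤ (P {ω | L ω > s / c * log n}).toReal
          + exp (-(n * (p * exp (-(c * (s / c * log n)))))) :=
        integral_le_tail_add_exp P hL hL0 hp0.le hp1 hc.le (by omega) _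
    _ ≤ (n : ℝ) ^ b' + (n : ℝ) ^ b' := by
        rw [hexp]
        exact add_le_add hT hR
    _ < (n : ℝ) ^ (b - b') * (n : ℝ) ^ b' := by
        have := rpow_pos_of_pos hn' b'
        nlinarith
    _ = (n : ℝ) ^ b := by rw [← rpow_add hn', sub_add_cancel]

theorem tendsto_log_integral_alohaBase_pow_div_log (hL : Measurable L) (hL0 : ∀ ω, 0 ≤ L ω)
    (hp0 : 0 < p) (hp1 : p ≤ 1) (hc : 0 < c) (hμ : 0 < μ)
    (htail : Tendsto (fun x : ℝ => log (P {ω | L ω > x}).toReal / x) atTop (𝓝 (-μ))) :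
    Tendsto (fun n : ℕ => log (∫ ω, alohaBase p n (exp (-(c * L ω))) ^ n ∂P) / log n)
      atTop (𝓝 (-(μ / c))) := by
  refine tendsto_order.2 ⟨fun b hb => ?_, fun b hb => ?_⟩
  · filter_upwards [eventually_lt_log_integral_div_log P hL hL0 hp0.le hp1 hc hμ htail hb]
      with n hn using hn.2
  · have hbc : -μ < b * c := by rwa [gt_iff_lt, ← neg_div, div_lt_iff₀ hc] at hb
    obtain ⟨s, hs, hs1⟩ := exists_between (show max 0 (-(b * c) / μ) < 1 from
      max_lt one_pos ((div_lt_one hμ).2 (by linarith)))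
    have hs0 : 0 < s := (le_max_left _ _).trans_lt hs
    have hsb : -μ * (s / c) < b := by
      have := (div_lt_iff₀ hμ).1 ((le_max_right _ _).trans_lt hs)
      rw [mul_div_assoc', div_lt_iff₀ hc]
      linarith
    filter_upwards [eventually_lt_log_integral_div_log P hL hL0 hp0.le hp1 hc hμ htail
        (show -(μ / c) - 1 < -(μ / c) by linarith),
      eventually_integral_lt_rpow P hL hL0 hp0 hp1 hc htail hs0 hs1 hsb, eventually_gt_atTop 1]
      with n hpos hlt hn
    exact log_div_log_lt_of_lt_rpow hpos.1 (by exact_mod_cast hn) hlt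

end Integral

/-- Analytic core of the lower bound in Theorem 3 (steady state behavior):
`E[(1 - (M-1)/(Mn) - (1/M)e^{-L(M-1)ν})^n]` decays as a power law of index `μ/((M-1)ν)`. -/
theorem stmt13 {Ω : Type*} {mΩ : MeasurableSpace Ω} (P : Measure Ω) [IsProbabilityMeasure P]
    (L : Ω → ℝ) (hLm : Measurable L) (hLnn : ∀ ω, 0 ≤ L ω)
    (μ ν : ℝ) (hμ : 0 < μ) (hν : 0 < ν)
    (M : ℕ) (hM : 2 ≤ M)
    (htail : Tendsto (fun x : ℝ => Real.log (P {ω | L ω > x}).toReal / x) atTop (nhds (-μ))) :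
    Tendsto (fun n : ℕ =>
        Real.log (∫ ω,
            (1 - ((M : ℝ) - 1) / ((M : ℝ) * n)
              - (1 / (M : ℝ)) * Real.exp (-(L ω * ((M : ℝ) - 1) * ν))) ^ n ∂P)
          / Real.log n) atTop
      (nhds (-(μ / (((M : ℝ) - 1) * ν)))) := by
  have hM1 : (1 : ℝ) < M := by exact_mod_cast hM
  convert tendsto_log_integral_alohaBase_pow_div_log P hLm hLnn (p := 1 / M) (c := (M - 1) * ν)
    (by positivity) (div_le_one_of_le₀ hM1.le (by positivity)) (mul_pos (sub_pos.2 hM1) hν)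
    hμ htail using 7 with n ω
  rw [alohaBase, one_sub_div (zero_lt_one.trans hM1).ne', div_div]
  ring_nf
end
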